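/- arXiv:1106.1973 — 5 statements merged into one kernel-verified Lean document; each statement's English description precedes it below -/
import Mathlib

section
/- Every connected cubic graph G on n vertices that contains a supercycle on s vertices, with n > 2s − 2, admits a partition of its vertex set into two parts A and B such that the edges between A and B form a matching of size at most s − 2, and both induced subgraphs G[A] and G[B] are connected supercycles. -/
/-!
Start from the supercycle `A = V(H)`. In a cubic graph each vertex of `A` has one or no
neighbour outside `A`, and by the handshake lemma at least two have none, so
`|cut A| + |A| ≤ 2s - 2`. Adding to `A` a vertex with two neighbours in `A` keeps `A` a
supercycle and does not increase `|cut A| + |A|`; once no such vertex is left, every outside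
vertex has at most one neighbour in `A`, and `n > 2s - 2` leaves an outside vertex `b` with
none. The component `C` of `b` in `G - A` and its complement are then both supercycles, every
edge between them is a cut edge of `A`, and both sides see at most one such edge per vertex.
-/

namespace SimpleGraph

variable {V : Type*} {G : SimpleGraph V} {A : Set V}

structure IsSupercycle (G : SimpleGraph V) : Prop where
  connected : G.Connected
  two_le_ncard_neighborSet : ∀ v, 2 ≤ (G.neighborSet v).ncard
  exists_three_le_ncard_neighborSet : ∃ v, 3 ≤ (G.neighborSet v).ncard

def cut (G : SimpleGraph V) (A : Set V) : Set (V × V) :=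
  {q | q.1 ∈ A ∧ q.2 ∉ A ∧ G.Adj q.1 q.2}

lemma ncard_neighborSet_induce (v : A) :
    ((G.induce A).neighborSet v).ncard = (G.neighborSet v ∩ A).ncard := by
  have : Subtype.val '' (G.induce A).neighborSet v = G.neighborSet v ∩ A := by
    rw [neighborSet_induce, Set.image_preimage_eq_inter_range, Subtype.range_coe]
  rw [← this, Set.ncard_image_of_injective _ Subtype.val_injective]

lemma isSupercycle_induce_iff :
    (G.induce A).IsSupercycle ↔ (G.induce A).Connected ∧
      (∀ v ∈ A, 2 ≤ (G.neighborSet v ∩ A).ncard) ∧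
      ∃ v ∈ A, 3 ≤ (G.neighborSet v ∩ A).ncard := by
  constructor
  · rintro ⟨h₁, h₂, v, h₃⟩
    refine ⟨h₁, fun v hv => ?_, v, v.2, ?_⟩
    · simpa only [ncard_neighborSet_induce] using h₂ ⟨v, hv⟩
    · simpa only [ncard_neighborSet_induce] using h₃
  · rintro ⟨h₁, h₂, v, hv, h₃⟩
    refine ⟨h₁, fun v => ?_, ⟨v, hv⟩, ?_⟩ <;> rw [ncard_neighborSet_induce]
    exacts [h₂ v v.2, h₃]

lemma Subgraph.isSupercycle_induce_verts [Finite V] {H : G.Subgraph} (hconn : H.Connected)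
    (hdeg : ∀ v ∈ H.verts, 2 ≤ (H.neighborSet v).ncard)
    (hsup : ∃ v ∈ H.verts, 3 ≤ (H.neighborSet v).ncard) :
    (G.induce H.verts).IsSupercycle := by
  have hsub (v : V) : (H.neighborSet v).ncard ≤ (G.neighborSet v ∩ H.verts).ncard :=
    Set.ncard_le_ncard fun _ hw => ⟨H.adj_sub hw, hw.snd_mem⟩
  obtain ⟨v, hv, h3⟩ := hsup
  exact isSupercycle_induce_iff.mpr ⟨hconn.induce_verts, fun v hv => (hdeg v hv).trans (hsub v),
    v, hv, h3.trans (hsub v)⟩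

lemma IsSupercycle.induce_insert [Finite V] (hA : (G.induce A).IsSupercycle) {b : V}
    (hb : 2 ≤ (G.neighborSet b ∩ A).ncard) : (G.induce (insert b A)).IsSupercycle := by
  obtain ⟨hconn, hdeg, v, hv, h3⟩ := isSupercycle_induce_iff.mp hA
  obtain ⟨a, hba, ha⟩ := Set.nonempty_of_ncard_ne_zero (s := G.neighborSet b ∩ A) (by omega)
  have hmono (x : V) : (G.neighborSet x ∩ A).ncard ≤ (G.neighborSet x ∩ insert b A).ncard :=
    Set.ncard_le_ncard (Set.inter_subset_inter_right _ (Set.subset_insert b A))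
  have hconn' := induce_union_connected (induce_pair_connected_of_adj hba).preconnected
    hconn.preconnected ⟨a, by simp, ha⟩
  rw [Set.insert_union, Set.singleton_union, Set.insert_eq_of_mem ha] at hconn'
  refine isSupercycle_induce_iff.mpr
    ⟨hconn', ?_, v, Set.mem_insert_of_mem b hv, h3.trans (hmono v)⟩
  rintro x (rfl | hx)
  exacts [hb.trans (hmono x), (hdeg x hx).trans (hmono x)]

lemma ncard_cut_insert_add [Finite V] {b : V} (hb : b ∉ A) :
    (G.cut (insert b A)).ncard + (G.neighborSet b ∩ A).ncard =
      (G.cut A).ncard + (G.neighborSet b \ A).ncard := by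
  have hunion : G.cut (insert b A) ∪ (·, b) '' (G.neighborSet b ∩ A) =
      G.cut A ∪ (b, ·) '' (G.neighborSet b \ A) := by
    ext ⟨x, y⟩
    simp only [cut, Set.mem_union, Set.mem_ofPred_eq, Set.mem_insert_iff, Set.mem_image,
      Set.mem_inter_iff, Set.mem_sdiff, mem_neighborSet, Prod.mk.injEq]
    constructor
    · rintro ((⟨rfl | hx, hy, hxy⟩) | ⟨a, ⟨hba, ha⟩, rfl, rfl⟩)
      · exact Or.inr ⟨y, ⟨hxy, fun h => hy (Or.inr h)⟩, rfl, rfl⟩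
      · exact Or.inl ⟨hx, fun h => hy (Or.inr h), hxy⟩
      · exact Or.inl ⟨ha, hb, hba.symm⟩
    · rintro (⟨hx, hy, hxy⟩ | ⟨c, ⟨hbc, hc⟩, rfl, rfl⟩)
      · by_cases hyb : y = b
        · subst hyb; exact Or.inr ⟨x, ⟨hxy.symm, hx⟩, rfl, rfl⟩
        · exact Or.inl ⟨Or.inr hx, by tauto, hxy⟩
      · exact Or.inl ⟨Or.inl rfl, by rintro (rfl | h); exacts [hbc.ne rfl, hc h], hbc⟩
  have hdisj₁ : Disjoint (G.cut (insert b A)) ((·, b) '' (G.neighborSet b ∩ A)) := by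
    rw [Set.disjoint_right]
    rintro _ ⟨a, -, rfl⟩ ⟨-, h, -⟩
    exact h (Set.mem_insert b A)
  have hdisj₂ : Disjoint (G.cut A) ((b, ·) '' (G.neighborSet b \ A)) := by
    rw [Set.disjoint_right]
    rintro _ ⟨c, -, rfl⟩ ⟨h, -, -⟩
    exact hb h
  rw [← Set.ncard_image_of_injective (G.neighborSet b ∩ A) (Prod.mk_left_injective b),
    ← Set.ncard_image_of_injective (G.neighborSet b \ A) (Prod.mk_right_injective b),
    ← Set.ncard_union_eq hdisj₁, ← Set.ncard_union_eq hdisj₂, hunion]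

lemma degree_induce {v : V} (hv : v ∈ A) [Fintype ((G.induce A).neighborSet ⟨v, hv⟩)] :
    (G.induce A).degree ⟨v, hv⟩ = (G.neighborSet v ∩ A).ncard := by
  rw [← card_neighborSet_eq_degree, ← Nat.card_eq_fintype_card, Nat.card_coe_set_eq,
    ncard_neighborSet_induce]

section Cubic

variable [Finite V]

lemma ncard_inter_add_ncard_diff_of_cubic (hcubic : ∀ v, (G.neighborSet v).ncard = 3) (v : V)
    (S : Set V) : (G.neighborSet v ∩ S).ncard + (G.neighborSet v \ S).ncard = 3 := by
  rw [Set.ncard_inter_add_ncard_sdiff_eq_ncard _ _ (Set.toFinite _), hcubic]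

lemma even_ncard_setOf_odd_ncard_neighborSet_inter (A : Set V) :
    Even {v ∈ A | Odd (G.neighborSet v ∩ A).ncard}.ncard := by
  classical
  have := Fintype.ofFinite V
  have himage : {v ∈ A | Odd (G.neighborSet v ∩ A).ncard} =
      Subtype.val '' {v : A | Odd ((G.induce A).degree v)} := by
    ext v
    constructor
    · rintro ⟨hv, hodd⟩
      exact ⟨⟨v, hv⟩, by rwa [Set.mem_ofPred_eq, degree_induce], rfl⟩
    · rintro ⟨⟨v, hv⟩, hodd, rfl⟩
      rw [Set.mem_ofPred_eq, degree_induce] at hodd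
      exact ⟨hv, hodd⟩
  rw [himage, Set.ncard_image_of_injective _ Subtype.val_injective, Set.ncard_eq_toFinset_card',
    Set.toFinset_ofPred]
  exact (G.induce A).even_card_odd_degree_vertices

lemma ncard_cut_add_two_le (hcubic : ∀ v, (G.neighborSet v).ncard = 3)
    (hA : (G.induce A).IsSupercycle) : (G.cut A).ncard + 2 ≤ A.ncard := by
  obtain ⟨-, hdeg, v₃, hv₃A, hv₃⟩ := isSupercycle_induce_iff.mp hA
  have hsplit := ncard_inter_add_ncard_diff_of_cubic hcubic
  set T := {v ∈ A | Odd (G.neighborSet v ∩ A).ncard}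
  have hcut : (G.cut A).ncard ≤ (A \ T).ncard := by
    refine Set.ncard_le_ncard_of_injOn Prod.fst ?_ ?_
    · rintro ⟨v, y⟩ ⟨hv, hy, hvy⟩
      refine ⟨hv, fun hT => ?_⟩
      obtain ⟨k, hk⟩ : Odd (G.neighborSet v ∩ A).ncard := hT.2
      have := hsplit v A
      have := hdeg v hv
      have := (Set.ncard_pos (Set.toFinite _)).mpr
        (Set.nonempty_of_mem (show y ∈ G.neighborSet v \ A from ⟨hvy, hy⟩))
      omega
    · rintro ⟨v, y⟩ ⟨hv, hy, hvy⟩ ⟨v', y'⟩ ⟨-, hy', hvy'⟩ (rfl : v = v')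
      have := hsplit v A
      have := hdeg v hv
      have hout : (G.neighborSet v \ A).ncard ≤ 1 := by omega
      obtain rfl := (Set.ncard_le_one (Set.toFinite _)).mp hout y ⟨hvy, hy⟩ y' ⟨hvy', hy'⟩
      rfl
  have hT : 2 ≤ T.ncard := by
    have hv₃T : v₃ ∈ T := ⟨hv₃A, 1, by have := hsplit v₃ A; omega⟩
    have hpos := (Set.ncard_pos (Set.toFinite _)).mpr ⟨v₃, hv₃T⟩
    obtain ⟨k, hk⟩ : Even T.ncard := even_ncard_setOf_odd_ncard_neighborSet_inter A
    omega
  have := Set.ncard_sdiff_add_ncard_of_subset (s := T) (Set.sep_subset A _)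
  omega

lemma two_le_ncard_neighborSet_diff (hcubic : ∀ v, (G.neighborSet v).ncard = 3)
    (hclosed : ∀ b ∉ A, (G.neighborSet b ∩ A).ncard ≤ 1) {x : V} (hx : x ∉ A) :
    2 ≤ (G.neighborSet x \ A).ncard := by
  have := ncard_inter_add_ncard_diff_of_cubic hcubic x A
  have := hclosed x hx
  omega

/-- `A` is chosen of maximal size; adding a vertex with two neighbours in `A` would preserve
all the other conditions. -/
lemma exists_isSupercycle_superset_closed (hcubic : ∀ v, (G.neighborSet v).ncard = 3)
    {A₀ : Set V} (hA₀ : (G.induce A₀).IsSupercycle) :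
    ∃ A, A₀ ⊆ A ∧ (G.induce A).IsSupercycle ∧
      (G.cut A).ncard + A.ncard ≤ (G.cut A₀).ncard + A₀.ncard ∧
      ∀ b ∉ A, (G.neighborSet b ∩ A).ncard ≤ 1 := by
  set F := {A | A₀ ⊆ A ∧ (G.induce A).IsSupercycle ∧
      (G.cut A).ncard + A.ncard ≤ (G.cut A₀).ncard + A₀.ncard}
  obtain ⟨A, ⟨hA₀A, hA, hbound⟩, hmax⟩ :=
    Set.exists_max_image F Set.ncard (Set.toFinite F) ⟨A₀, subset_rfl, hA₀, le_rfl⟩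
  refine ⟨A, hA₀A, hA, hbound, fun b hb => ?_⟩
  by_contra! h2
  have hins := ncard_cut_insert_add (G := G) hb
  have := ncard_inter_add_ncard_diff_of_cubic hcubic b A
  have hcard : (insert b A).ncard = A.ncard + 1 := Set.ncard_insert_of_notMem hb
  have := hmax (insert b A)
    ⟨hA₀A.trans (Set.subset_insert b A), hA.induce_insert (by omega), by omega⟩
  omega

end Cubic

lemma exists_neighborSet_inter_eq_empty_of_ncard_cut_lt [Finite V]
    (h : (G.cut A).ncard < Aᶜ.ncard) : ∃ b ∉ A, G.neighborSet b ∩ A = ∅ := by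
  by_contra! hne
  choose! f hf using hne
  refine (Set.ncard_le_ncard_of_injOn (fun b => (f b, b)) ?_ ?_).not_gt h
  · intro b hb
    obtain ⟨hba, ha⟩ := hf b hb
    exact ⟨ha, hb, hba.symm⟩
  · intro b _ b' _ h
    exact congrArg Prod.snd h

section Connectivity

variable {S : Set V}

lemma Walk.exists_walk_support_subset_of_adj_mem
    (hS : ∀ x ∈ S, ∀ y ∉ S, G.Adj x y → x ∈ A) {u v : V} (p : G.Walk u v) (hu : u ∈ S)
    (hv : v ∈ A) :
    ∃ a ∈ A, ∃ q : G.Walk u a, ∀ z ∈ q.support, z ∈ S := by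
  induction p with
  | nil => exact ⟨_, hv, .nil, by simpa using hu⟩
  | @cons u w v huw p ih =>
    by_cases huA : u ∈ A
    · exact ⟨u, huA, .nil, by simpa using hu⟩
    have hw : w ∈ S := by_contra fun hw => huA (hS u hu w hw huw)
    obtain ⟨a, ha, q, hq⟩ := ih hw hv
    exact ⟨a, ha, .cons huw q, by simpa [hu] using hq⟩

/-- A walk from any vertex of `S` to `A` cannot leave `S` before it reaches `A`. -/
lemma induce_connected_of_adj_mem (hG : G.Preconnected) (hA : (G.induce A).Connected)
    (hAS : A ⊆ S) (hS : ∀ x ∈ S, ∀ y ∉ S, G.Adj x y → x ∈ A) :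
    (G.induce S).Connected := by
  obtain ⟨⟨a₀, ha₀⟩⟩ := hA.nonempty
  refine induce_connected_of_patches a₀ (hAS ha₀) fun {v} hv => ?_
  obtain ⟨a, ha, q, hq⟩ := (hG v a₀).some.exists_walk_support_subset_of_adj_mem hS hv ha₀
  have hconn := induce_union_connected q.connected_induce_support.preconnected hA.preconnected
    ⟨a, q.end_mem_support, ha⟩
  exact ⟨_, Set.union_subset hq hAS, Or.inr ha₀, Or.inl q.start_mem_support, hconn _ _⟩

end Connectivity

def reachAvoiding (G : SimpleGraph V) (A : Set V) (b : V) : Set V :=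
  {x | ∃ w : G.Walk b x, ∀ z ∈ w.support, z ∉ A}

section reachAvoiding

variable {b : V}

lemma notMem_of_mem_reachAvoiding {x : V} (hx : x ∈ G.reachAvoiding A b) : x ∉ A := by
  obtain ⟨w, hw⟩ := hx
  exact hw x w.end_mem_support

lemma mem_reachAvoiding_self (hb : b ∉ A) : b ∈ G.reachAvoiding A b :=
  ⟨.nil, by simpa using hb⟩

lemma mem_reachAvoiding_of_adj {x y : V} (hx : x ∈ G.reachAvoiding A b) (hxy : G.Adj x y)
    (hy : y ∉ A) : y ∈ G.reachAvoiding A b := by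
  obtain ⟨w, hw⟩ := hx
  refine ⟨w.concat hxy, fun z hz => ?_⟩
  rw [Walk.support_concat, List.mem_append, List.mem_singleton] at hz
  rcases hz with hz | rfl
  exacts [hw z hz, hy]

lemma connected_induce_reachAvoiding (hb : b ∉ A) :
    (G.induce (G.reachAvoiding A b)).Connected := by
  classical
  refine induce_connected_of_patches b (mem_reachAvoiding_self hb) fun {x} ⟨w, hw⟩ => ?_
  have hsub : {z | z ∈ w.support} ⊆ G.reachAvoiding A b := fun z hz =>
    ⟨w.takeUntil z hz, fun u hu => hw u (w.support_takeUntil_subset_support hz hu)⟩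
  exact ⟨_, hsub, w.start_mem_support, w.end_mem_support, w.connected_induce_support _ _⟩

lemma mem_of_adj_mem_reachAvoiding {x y : V} (hy : y ∈ G.reachAvoiding A b) (hyx : G.Adj y x)
    (hx : x ∉ G.reachAvoiding A b) : x ∈ A :=
  by_contra fun hxA => hx (mem_reachAvoiding_of_adj hy hyx hxA)

lemma cut_compl_reachAvoiding_subset : G.cut (G.reachAvoiding A b)ᶜ ⊆ G.cut A := by
  rintro ⟨x, y⟩ ⟨hx, hy, hxy⟩
  rw [Set.notMem_compl_iff] at hy
  exact ⟨mem_of_adj_mem_reachAvoiding hy hxy.symm hx, notMem_of_mem_reachAvoiding hy, hxy⟩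

end reachAvoiding

lemma eq_iff_eq_of_mem_cut [Finite V] (hout : ∀ a ∈ A, (G.neighborSet a \ A).ncard ≤ 1)
    (hin : ∀ b ∉ A, (G.neighborSet b ∩ A).ncard ≤ 1) {a b a' b' : V}
    (h : (a, b) ∈ G.cut A) (h' : (a', b') ∈ G.cut A) : a = a' ↔ b = b' := by
  obtain ⟨ha, hb, hab⟩ := h
  obtain ⟨ha', hb', hab'⟩ := h'
  constructor
  · rintro rfl
    exact (Set.ncard_le_one (Set.toFinite _)).mp (hout a ha) b ⟨hab, hb⟩ b' ⟨hab', hb'⟩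
  · rintro rfl
    exact (Set.ncard_le_one (Set.toFinite _)).mp (hin b hb)
      a ⟨hab.symm, ha⟩ a' ⟨hab'.symm, ha'⟩

section Split

variable [Finite V] {b : V}

lemma isSupercycle_induce_reachAvoiding (hcubic : ∀ v, (G.neighborSet v).ncard = 3)
    (hclosed : ∀ b ∉ A, (G.neighborSet b ∩ A).ncard ≤ 1) (hb : b ∉ A)
    (hbA : G.neighborSet b ∩ A = ∅) : (G.induce (G.reachAvoiding A b)).IsSupercycle := by
  refine isSupercycle_induce_iff.mpr ⟨connected_induce_reachAvoiding hb, fun x hx => ?_, b,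
    mem_reachAvoiding_self hb, ?_⟩
  · refine (two_le_ncard_neighborSet_diff hcubic hclosed (notMem_of_mem_reachAvoiding hx)).trans
      (Set.ncard_le_ncard fun y hy => ⟨hy.1, mem_reachAvoiding_of_adj hx hy.1 hy.2⟩)
  · have hsub : G.neighborSet b ⊆ G.reachAvoiding A b := fun y hy =>
      mem_reachAvoiding_of_adj (mem_reachAvoiding_self hb) hy fun hyA =>
        (Set.eq_empty_iff_forall_notMem.mp hbA) y ⟨hy, hyA⟩
    rw [Set.inter_eq_left.mpr hsub, hcubic]

lemma isSupercycle_induce_compl_reachAvoiding (hG : G.Connected)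
    (hcubic : ∀ v, (G.neighborSet v).ncard = 3) (hA : (G.induce A).IsSupercycle)
    (hclosed : ∀ b ∉ A, (G.neighborSet b ∩ A).ncard ≤ 1) :
    (G.induce (G.reachAvoiding A b)ᶜ).IsSupercycle := by
  obtain ⟨hAconn, hAdeg, a, ha, ha₃⟩ := isSupercycle_induce_iff.mp hA
  have hAC : A ⊆ (G.reachAvoiding A b)ᶜ := fun a ha hC => notMem_of_mem_reachAvoiding hC ha
  have hmono (x : V) :
      (G.neighborSet x ∩ A).ncard ≤ (G.neighborSet x ∩ (G.reachAvoiding A b)ᶜ).ncard :=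
    Set.ncard_le_ncard (Set.inter_subset_inter_right _ hAC)
  refine isSupercycle_induce_iff.mpr ⟨induce_connected_of_adj_mem hG.preconnected hAconn hAC
    fun x hx y hy hxy => ?_, fun x hx => ?_, a, hAC ha, ha₃.trans (hmono a)⟩
  · exact mem_of_adj_mem_reachAvoiding (Set.notMem_compl_iff.mp hy) hxy.symm hx
  · by_cases hxA : x ∈ A
    · exact (hAdeg x hxA).trans (hmono x)
    · exact (two_le_ncard_neighborSet_diff hcubic hclosed hxA).trans (Set.ncard_le_ncard
        fun y hy => ⟨hy.1, fun hyC => hx (mem_reachAvoiding_of_adj hyC hy.1.symm hxA)⟩)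

/-- The cut is taken around the component of `G - A` at a vertex with no neighbour in `A`. -/
theorem exists_matching_cut_of_closed (hG : G.Connected)
    (hcubic : ∀ v, (G.neighborSet v).ncard = 3) (hA : (G.induce A).IsSupercycle)
    (hclosed : ∀ b ∉ A, (G.neighborSet b ∩ A).ncard ≤ 1)
    (hcut : (G.cut A).ncard < Aᶜ.ncard) :
    ∃ S, G.cut S ⊆ G.cut A ∧ (∀ a ∈ S, (G.neighborSet a \ S).ncard ≤ 1) ∧
      (∀ b ∉ S, (G.neighborSet b ∩ S).ncard ≤ 1) ∧
      (G.induce S).IsSupercycle ∧ (G.induce Sᶜ).IsSupercycle := by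
  obtain ⟨b, hb, hbA⟩ := exists_neighborSet_inter_eq_empty_of_ncard_cut_lt hcut
  have hS := isSupercycle_induce_compl_reachAvoiding (b := b) hG hcubic hA hclosed
  refine ⟨_, cut_compl_reachAvoiding_subset, fun a ha => ?_, fun y hy => ?_, hS, ?_⟩
  · have := ncard_inter_add_ncard_diff_of_cubic hcubic a (G.reachAvoiding A b)ᶜ
    have := (isSupercycle_induce_iff.mp hS).2.1 a ha
    omega
  · rw [Set.notMem_compl_iff] at hy
    have hsub : G.neighborSet y ∩ (G.reachAvoiding A b)ᶜ ⊆ G.neighborSet y ∩ A :=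
      fun z hz => ⟨hz.1, mem_of_adj_mem_reachAvoiding hy hz.1 hz.2⟩
    exact (Set.ncard_le_ncard hsub).trans (hclosed y (notMem_of_mem_reachAvoiding hy))
  · rw [compl_compl]
    exact isSupercycle_induce_reachAvoiding hcubic hclosed hb hbA

end Split

end SimpleGraph

/-- Every connected cubic graph on `n` vertices containing a supercycle on `s` vertices,
with `n > 2s - 2`, has a suitable M-cut of size at most `s - 2`: a vertex partition
`(A, Aᶜ)` whose crossing edges form a matching of size at most `s - 2`, both sides inducing
connected supercycles. -/
theorem cubic_suitable_M_cut_of_supercycle {V : Type*} [Fintype V] (G : SimpleGraph V) (s : ℕ)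
    (hconn : G.Connected) (hreg : ∀ v, (G.neighborSet v).ncard = 3)
    (H : G.Subgraph) (hHconn : H.Connected)
    (hHdeg : ∀ v ∈ H.verts, 2 ≤ (H.neighborSet v).ncard)
    (hHsup : ∃ v ∈ H.verts, 3 ≤ (H.neighborSet v).ncard)
    (hs : H.verts.ncard = s)
    (hn : Fintype.card V > 2 * s - 2) :
    ∃ A : Set V,
      (∀ a b a' b' : V, a ∈ A → b ∉ A → G.Adj a b → a' ∈ A → b' ∉ A → G.Adj a' b' →
        (a = a' ↔ b = b')) ∧
      {q : V × V | q.1 ∈ A ∧ q.2 ∉ A ∧ G.Adj q.1 q.2}.ncard ≤ s - 2 ∧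
      (G.induce A).Connected ∧
      (∀ v : A, 2 ≤ {u : A | (G.induce A).Adj v u}.ncard) ∧
      (∃ v : A, 3 ≤ {u : A | (G.induce A).Adj v u}.ncard) ∧
      (G.induce Aᶜ).Connected ∧
      (∀ v : ↥Aᶜ, 2 ≤ {u : ↥Aᶜ | (G.induce Aᶜ).Adj v u}.ncard) ∧
      (∃ v : ↥Aᶜ, 3 ≤ {u : ↥Aᶜ | (G.induce Aᶜ).Adj v u}.ncard) := by
  have hH := H.isSupercycle_induce_verts hHconn hHdeg hHsup
  have hcutH := SimpleGraph.ncard_cut_add_two_le hreg hH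
  obtain ⟨A, hHA, hA, hcutA, hclosed⟩ := SimpleGraph.exists_isSupercycle_superset_closed hreg hH
  have hsA : s ≤ A.ncard := hs ▸ Set.ncard_le_ncard hHA
  have hcard : A.ncard + Aᶜ.ncard = Fintype.card V := by
    rw [Set.ncard_add_ncard_compl, Nat.card_eq_fintype_card]
  obtain ⟨S, hcutS, hout, hin, ⟨hSconn, hSdeg, hSsup⟩, ⟨hSconn', hSdeg', hSsup'⟩⟩ :=
    SimpleGraph.exists_matching_cut_of_closed hconn hreg hA hclosed (by omega)
  refine ⟨S, fun a b a' b' ha hb hab ha' hb' hab' =>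
    SimpleGraph.eq_iff_eq_of_mem_cut hout hin ⟨ha, hb, hab⟩ ⟨ha', hb', hab'⟩, ?_,
    hSconn, hSdeg, hSsup, hSconn', hSdeg', hSsup'⟩
  calc (G.cut S).ncard ≤ (G.cut A).ncard := Set.ncard_le_ncard hcutS
    _ ≤ s - 2 := by omega
end

section
/- If a connected cubic graph is 2-connected but has a 2-vertex disconnecting set, then it contains an edge cut of size 2 consisting of two non-adjacent edges (edges with no common endpoint). -/
/-!
Let `{x, y}` disconnect `G`, and split `G - {x, y}` into two nonempty vertex sets `A`, `B` with no
edges between them. Since `G - x` and `G - y` are connected, each of `x`, `y` has a neighbour in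
each of `A`, `B`. If, on one side, `x` and `y` each have a single neighbour `a` resp. `b`, then
`a ≠ b` (otherwise `a` would be a cut vertex) and `{xa, yb}` is the required cut. Otherwise,
as `x` and `y` have degree three, one of them, say `x`, has two neighbours in `A` and only one,
`b`, outside `A`, while `y` has a single neighbour `a` in `A`; then `{xb, ya}` cuts off `A ∪ {x}`.
-/

namespace SimpleGraph

variable {V W : Type*} {G : SimpleGraph V} {H : SimpleGraph W}

theorem Reachable.mem_of_forall_adj_mem {S : Set W} (hS : ∀ a ∈ S, ∀ b, H.Adj a b → b ∈ S)
    {u v : W} (h : H.Reachable u v) (hu : u ∈ S) : v ∈ S := by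
  by_contra hv
  obtain ⟨p⟩ := h
  obtain ⟨d, -, hd₁, hd₂⟩ := p.exists_boundary_dart S hu hv
  exact hd₂ (hS _ hd₁ _ d.adj)

theorem exists_adj_ne_ne_of_two_lt_ncard {v : V} (h : 2 < (G.neighborSet v).ncard) (x y : V) :
    ∃ t, G.Adj v t ∧ t ≠ x ∧ t ≠ y := by
  have hxy : ({x, y} : Set V).ncard < (G.neighborSet v).ncard :=
    lt_of_le_of_lt ((Set.ncard_insert_le x {y}).trans (by rw [Set.ncard_singleton])) h
  obtain ⟨t, hvt, ht⟩ := Set.exists_mem_notMem_of_ncard_lt_ncard hxy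
  simp only [Set.mem_insert_iff, Set.mem_singleton_iff, not_or] at ht
  exact ⟨t, hvt, ht⟩

theorem subsingleton_neighborSet_diff {v : V} {A : Set V} (h3 : (G.neighborSet v).ncard = 3)
    (hA : ¬ (G.neighborSet v ∩ A).Subsingleton) : (G.neighborSet v \ A).Subsingleton := by
  have : Finite (G.neighborSet v) := (Set.finite_of_ncard_pos (by omega)).to_subtype
  have h2 : 1 < (G.neighborSet v ∩ A).ncard :=
    Set.one_lt_ncard_iff_nontrivial.mpr (Set.not_subsingleton_iff.mp hA)
  have hsum := Set.ncard_inter_add_ncard_sdiff_eq_ncard (G.neighborSet v) A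
  exact Set.ncard_le_one_iff_subsingleton.mp (by omega)

def HasDisjointTwoEdgeCut (G : SimpleGraph V) : Prop :=
  ∃ a b c d : V, G.Adj a b ∧ G.Adj c d ∧ a ≠ c ∧ a ≠ d ∧ b ≠ c ∧ b ≠ d ∧
    ¬ (G.deleteEdges {s(a, b), s(c, d)}).Connected

theorem hasDisjointTwoEdgeCut_of_boundary {a b c d : V} (S : Set V) {u v : V} (hu : u ∈ S)
    (hv : v ∉ S) (hab : G.Adj a b) (hcd : G.Adj c d) (hac : a ≠ c) (had : a ≠ d) (hbc : b ≠ c)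
    (hbd : b ≠ d) (hS : ∀ p ∈ S, ∀ q ∉ S, G.Adj p q → s(p, q) = s(a, b) ∨ s(p, q) = s(c, d)) :
    G.HasDisjointTwoEdgeCut := by
  refine ⟨a, b, c, d, hab, hcd, hac, had, hbc, hbd, fun hconn => hv ?_⟩
  refine (hconn.preconnected u v).mem_of_forall_adj_mem (fun p hp q hpq => ?_) hu
  by_contra hq
  rw [deleteEdges_adj] at hpq
  exact hpq.2 (hS p hp q hq hpq.1)

/-- `A` is a union of connected components of `G - {x, y}`. -/
def IsFragment (G : SimpleGraph V) (x y : V) (A : Set V) : Prop :=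
  x ∉ A ∧ y ∉ A ∧ ∀ a ∈ A, ∀ b, G.Adj a b → b ∈ A ∨ b = x ∨ b = y

namespace IsFragment

variable {x y a : V} {A B : Set V}

theorem symm (hA : G.IsFragment x y A) : G.IsFragment y x A :=
  ⟨hA.2.1, hA.1, fun a ha b hab => (hA.2.2 a ha b hab).imp_right Or.symm⟩

theorem exists_adj (hA : G.IsFragment x y A) (ha : a ∈ A) (hyx : y ≠ x)
    (hconn : (G.induce {u | u ≠ x}).Connected) : ∃ b ∈ A, G.Adj y b := by
  by_contra! hy
  have hax : a ≠ x := fun h => hA.1 (h ▸ ha)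
  refine hA.2.1 <| ((hconn.preconnected ⟨a, hax⟩ ⟨y, hyx⟩).mem_of_forall_adj_mem
    (S := Subtype.val ⁻¹' A) (fun p hp q hpq => ?_) ha)
  rw [comap_adj, Function.Embedding.subtype_apply] at hpq
  rcases hA.2.2 p hp q hpq with hq | hq | hq
  · exact hq
  · exact absurd hq q.2
  · exact absurd (hq ▸ hpq.symm) (hy p hp)

theorem not_connected_induce_ne (hA : G.IsFragment x y A) (ha : a ∈ A)
    (hx : (G.neighborSet x ∩ A).Subsingleton) (hy : (G.neighborSet y ∩ A).Subsingleton)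
    (hxa : G.Adj x a) (hya : G.Adj y a) (hdeg : 2 < (G.neighborSet a).ncard) :
    ¬ (G.induce {u | u ≠ a}).Connected := by
  intro hconn
  obtain ⟨t, hat, htx, hty⟩ := exists_adj_ne_ne_of_two_lt_ncard hdeg x y
  have htA : t ∈ A := by simpa [htx, hty] using hA.2.2 a ha t hat
  have hxa' : x ≠ a := fun h => hA.1 (h ▸ ha)
  refine hA.1 <| ((hconn.preconnected ⟨t, G.ne_of_adj hat.symm⟩ ⟨x, hxa'⟩).mem_of_forall_adj_mem
    (S := Subtype.val ⁻¹' A) (fun p hp q hpq => ?_) htA)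
  rw [comap_adj, Function.Embedding.subtype_apply] at hpq
  rcases hA.2.2 p hp q hpq with hq | hq | hq
  · exact hq
  · exact absurd (hx ⟨hq ▸ hpq.symm, hp⟩ ⟨hxa, ha⟩) p.2
  · exact absurd (hy ⟨hq ▸ hpq.symm, hp⟩ ⟨hya, ha⟩) p.2

theorem hasDisjointTwoEdgeCut_of_subsingleton (hA : G.IsFragment x y A) (ha : a ∈ A)
    (hxy : x ≠ y) (hx : (G.neighborSet x ∩ A).Subsingleton)
    (hy : (G.neighborSet y ∩ A).Subsingleton) (hdeg : ∀ v, 2 < (G.neighborSet v).ncard)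
    (h2conn : ∀ v : V, (G.induce {u | u ≠ v}).Connected) : G.HasDisjointTwoEdgeCut := by
  obtain ⟨a', ha', hxa'⟩ := hA.symm.exists_adj ha hxy (h2conn y)
  obtain ⟨b, hb, hyb⟩ := hA.exists_adj ha hxy.symm (h2conn x)
  have hab : a' ≠ b := by
    rintro rfl
    exact hA.not_connected_induce_ne ha' hx hy hxa' hyb (hdeg a') (h2conn a')
  refine hasDisjointTwoEdgeCut_of_boundary A ha' hA.1 hxa' hyb hxy (fun h => hA.1 (h ▸ hb))
    (fun h => hA.2.1 (h ▸ ha')) hab (fun p hp q hq hpq => ?_)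
  rcases (hA.2.2 p hp q hpq).resolve_left hq with rfl | rfl
  · exact .inl (by rw [hx ⟨hpq.symm, hp⟩ ⟨hxa', ha'⟩, Sym2.eq_swap])
  · exact .inr (by rw [hy ⟨hpq.symm, hp⟩ ⟨hyb, hb⟩, Sym2.eq_swap])

theorem hasDisjointTwoEdgeCut_of_diff_subsingleton (hA : G.IsFragment x y A)
    (hB : G.IsFragment x y B) (hAB : Disjoint A B) (ha : a ∈ A) {b : V} (hb : b ∈ B)
    (hxy : x ≠ y) (hx : (G.neighborSet x \ A).Subsingleton)
    (hy : (G.neighborSet y \ B).Subsingleton)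
    (h2conn : ∀ v : V, (G.induce {u | u ≠ v}).Connected) : G.HasDisjointTwoEdgeCut := by
  obtain ⟨a', ha', hya'⟩ := hA.exists_adj ha hxy.symm (h2conn x)
  obtain ⟨b', hb', hxb'⟩ := hB.symm.exists_adj hb hxy (h2conn y)
  have hb'A : b' ∉ A := hAB.notMem_of_mem_right hb'
  refine hasDisjointTwoEdgeCut_of_boundary (insert x A) (Set.mem_insert x A)
    (v := b') (by simp [hb'A, (G.ne_of_adj hxb').symm]) hxb' hya' hxy (fun h => hA.1 (h ▸ ha'))
    (fun h => hB.2.1 (h ▸ hb')) (fun h => hb'A (h ▸ ha')) (fun p hp q hq hpq => ?_)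
  rw [Set.mem_insert_iff, not_or] at hq
  rcases hp with rfl | hp
  · exact .inl (by rw [hx ⟨hpq, hq.2⟩ ⟨hxb', hb'A⟩])
  · obtain rfl : q = y := by simpa [hq.1, hq.2] using hA.2.2 p hp q hpq
    refine .inr (by rw [hy ⟨hpq.symm, hAB.notMem_of_mem_left hp⟩
      ⟨hya', hAB.notMem_of_mem_left ha'⟩, Sym2.eq_swap])

end IsFragment

theorem isFragment_setOf {x y : V} (P : {u | u ≠ x ∧ u ≠ y} → Prop)
    (hP : ∀ p q, (G.induce {u | u ≠ x ∧ u ≠ y}).Adj p q → (P p ↔ P q)) :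
    G.IsFragment x y {v | ∃ h, P ⟨v, h⟩} := by
  refine ⟨fun ⟨h, _⟩ => h.1 rfl, fun ⟨h, _⟩ => h.2 rfl, fun a ⟨ha, hPa⟩ b hab => ?_⟩
  by_cases hb : b ≠ x ∧ b ≠ y
  · exact .inl ⟨hb, (hP ⟨a, ha⟩ ⟨b, hb⟩ hab).mp hPa⟩
  · right
    tauto

theorem exists_isFragment_pair {x y : V} (hne : ∃ v, v ≠ x ∧ v ≠ y)
    (h : ¬ (G.induce {u | u ≠ x ∧ u ≠ y}).Connected) :
    ∃ A B, G.IsFragment x y A ∧ G.IsFragment x y B ∧ Disjoint A B ∧ A.Nonempty ∧ B.Nonempty := by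
  obtain ⟨v, hv⟩ := hne
  have : Nonempty {u | u ≠ x ∧ u ≠ y} := ⟨⟨v, hv⟩⟩
  obtain ⟨u, w, huw⟩ : ∃ u w, ¬ (G.induce {u | u ≠ x ∧ u ≠ y}).Reachable u w := by
    by_contra! h'
    exact h ⟨fun u w => h' u w⟩
  have hreach : ∀ p q, (G.induce {u | u ≠ x ∧ u ≠ y}).Adj p q →
      ((G.induce _).Reachable u p ↔ (G.induce _).Reachable u q) := fun p q hpq =>
    ⟨fun h => h.trans hpq.reachable, fun h => h.trans hpq.symm.reachable⟩
  refine ⟨_, _, isFragment_setOf _ hreach, isFragment_setOf _ fun p q hpq => not_congr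
    (hreach p q hpq), Set.disjoint_left.mpr fun a ⟨_, ha⟩ ⟨_, ha'⟩ => ha' ha,
    ⟨u, u.2, .rfl⟩, ⟨w, w.2, huw⟩⟩

end SimpleGraph

open SimpleGraph in
theorem cubic_two_cut_general {V : Type*} (G : SimpleGraph V)
    (hreg : ∀ v, (G.neighborSet v).ncard = 3)
    (h2conn : ∀ v : V, (G.induce {u | u ≠ v}).Connected)
    (hcut : ∃ x y : V, x ≠ y ∧ ¬ (G.induce {u | u ≠ x ∧ u ≠ y}).Connected) :
    ∃ a b c d : V, G.Adj a b ∧ G.Adj c d ∧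
      a ≠ c ∧ a ≠ d ∧ b ≠ c ∧ b ≠ d ∧
      ¬ (G.deleteEdges {s(a, b), s(c, d)}).Connected := by
  obtain ⟨x, y, hxy, hcut⟩ := hcut
  have hdeg : ∀ v, 2 < (G.neighborSet v).ncard := fun v => by rw [hreg v]; norm_num
  obtain ⟨t, -, htx, hty⟩ := exists_adj_ne_ne_of_two_lt_ncard (hdeg x) x y
  obtain ⟨A, B, hA, hB, hAB, ⟨a, ha⟩, ⟨b, hb⟩⟩ := exists_isFragment_pair ⟨t, htx, hty⟩ hcut
  by_cases hA1 : (G.neighborSet x ∩ A).Subsingleton ∧ (G.neighborSet y ∩ A).Subsingleton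
  · exact hA.hasDisjointTwoEdgeCut_of_subsingleton ha hxy hA1.1 hA1.2 hdeg h2conn
  by_cases hB1 : (G.neighborSet x ∩ B).Subsingleton ∧ (G.neighborSet y ∩ B).Subsingleton
  · exact hB.hasDisjointTwoEdgeCut_of_subsingleton hb hxy hB1.1 hB1.2 hdeg h2conn
  have inter_subset_diff : ∀ v, G.neighborSet v ∩ B ⊆ G.neighborSet v \ A :=
    fun v q hq => ⟨hq.1, hAB.notMem_of_mem_right hq.2⟩
  rcases not_and_or.mp hA1 with hxA | hyA
  · have hxA' := subsingleton_neighborSet_diff (hreg x) hxA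
    have hyB := subsingleton_neighborSet_diff (hreg y)
      fun h => hB1 ⟨hxA'.anti (inter_subset_diff x), h⟩
    exact hA.hasDisjointTwoEdgeCut_of_diff_subsingleton hB hAB ha hb hxy hxA' hyB h2conn
  · have hyA' := subsingleton_neighborSet_diff (hreg y) hyA
    have hxB := subsingleton_neighborSet_diff (hreg x)
      fun h => hB1 ⟨h, hyA'.anti (inter_subset_diff y)⟩
    exact hA.symm.hasDisjointTwoEdgeCut_of_diff_subsingleton hB.symm hAB ha hb hxy.symm hyA' hxB
      h2conn

/-- If a connected cubic graph has no cut vertex but has a 2-vertex disconnecting set,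
then it has an edge cut of size two consisting of two non-adjacent edges. -/
theorem cubic_two_cut {V : Type*} [Fintype V] (G : SimpleGraph V)
    (hconn : G.Connected) (hreg : ∀ v, (G.neighborSet v).ncard = 3)
    (h2conn : ∀ v : V, (G.induce {u | u ≠ v}).Connected)
    (hcut : ∃ x y : V, x ≠ y ∧ ¬ (G.induce {u | u ≠ x ∧ u ≠ y}).Connected) :
    ∃ a b c d : V, G.Adj a b ∧ G.Adj c d ∧
      a ≠ c ∧ a ≠ d ∧ b ≠ c ∧ b ≠ d ∧
      ¬ (G.deleteEdges {s(a, b), s(c, d)}).Connected :=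
  cubic_two_cut_general G hreg h2conn hcut
end

section
/- In any straight-line drawing of K₄ whose six edges use only four distinct slopes, some two of those slopes are each used by exactly two edges, and the four edges realizing these two repeated slopes form a 4-cycle; consequently the four vertices form a parallelogram. -/
/-- The direction (slope) of a nonzero vector of `ℝ²`, as a point of the projective line. -/
noncomputable def dir (v : ℝ × ℝ) : Projectivization ℝ (ℝ × ℝ) :=
  if h : v = 0 then Projectivization.mk ℝ ((1, 0) : ℝ × ℝ) (by norm_num [Prod.ext_iff])
  else Projectivization.mk ℝ v h

lemma dir_eq_iff {v w : ℝ × ℝ} (hv : v ≠ 0) (hw : w ≠ 0) :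
    dir v = dir w ↔ ∃ a : ℝ, a ≠ 0 ∧ v = a • w := by
  rw [dir, dir, dif_neg hv, dif_neg hw, Projectivization.mk_eq_mk_iff]
  constructor
  · rintro ⟨a, ha⟩
    exact ⟨a, a.ne_zero, ha.symm⟩
  · rintro ⟨a, ha0, ha⟩
    exact ⟨Units.mk0 a ha0, ha.symm⟩

lemma lindep {x y z : ℝ × ℝ} (h : ¬ Collinear ℝ ({x, y, z} : Set (ℝ × ℝ)))
    (s t : ℝ) (hst : s • (y - x) + t • (z - x) = 0) : s = 0 ∧ t = 0 := by
  have hzx : z - x ≠ 0 := by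
    intro hc
    apply h
    have : z = x := by rwa [sub_eq_zero] at hc
    subst this
    have : ({z, y, z} : Set (ℝ × ℝ)) = {z, y} := by ext w; simp; tauto
    rw [this]
    exact collinear_pair ℝ z y
  have hs : s = 0 := by
    by_contra hs
    apply h
    rw [collinear_iff_of_mem (Set.mem_insert x _)]
    refine ⟨z - x, ?_⟩
    rintro q (rfl | rfl | rfl)
    · exact ⟨0, by simp⟩
    · refine ⟨-(t/s), ?_⟩
      have h1 : s • (q - x) = (-t) • (z - x) := by
        linear_combination (norm := module) hst
      have h2 : q - x = (-(t/s)) • (z - x) := by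
        calc q - x = s⁻¹ • (s • (q - x)) := by
              rw [smul_smul, inv_mul_cancel₀ hs, one_smul]
          _ = s⁻¹ • ((-t) • (z - x)) := by rw [h1]
          _ = (-(t/s)) • (z - x) := by
              rw [smul_smul]; congr 1; field_simp
      rw [vadd_eq_add, ← h2]; abel
    · exact ⟨1, by simp⟩
  refine ⟨hs, ?_⟩
  rw [hs, zero_smul, zero_add, smul_eq_zero] at hst
  tauto

lemma five_le {α : Type*} {S : Set α} {a b c d e : α}
    (ha : a ∈ S) (hb : b ∈ S) (hc : c ∈ S) (hd : d ∈ S) (he : e ∈ S)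
    (hab : a ≠ b) (hac : a ≠ c) (had : a ≠ d) (hae : a ≠ e)
    (hbc : b ≠ c) (hbd : b ≠ d) (hbe : b ≠ e)
    (hcd : c ≠ d) (hce : c ≠ e) (hde : d ≠ e)
    (hS : S.ncard = 4) : False := by
  have hfin : S.Finite := by
    by_contra hf
    have := Set.Infinite.ncard hf
    omega
  have hsub : ({a, b, c, d, e} : Set α) ⊆ S := by
    intro x hx
    simp only [Set.mem_insert_iff, Set.mem_singleton_iff] at hx
    rcases hx with rfl | rfl | rfl | rfl | rfl <;> assumption
  have h5 : ({a, b, c, d, e} : Set α).ncard = 5 := by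
    rw [Set.ncard_insert_of_notMem (by simp [hab, hac, had, hae]),
        Set.ncard_insert_of_notMem (by simp [hbc, hbd, hbe]),
        Set.ncard_insert_of_notMem (by simp [hcd, hce]),
        Set.ncard_pair hde]
  have := Set.ncard_le_ncard hsub hfin
  omega

lemma edge_set_eq (p : Fin 4 → ℝ × ℝ) (s : Projectivization ℝ (ℝ × ℝ)) (a b c d : Fin 4)
    (hab : a < b) (hcd : c < d) (hne : ((a, b) : Fin 4 × Fin 4) ≠ (c, d))
    (h1 : dir (p a - p b) = s) (h2 : dir (p c - p d) = s)
    (hother : ∀ i j : Fin 4, i < j → ((i, j) : Fin 4 × Fin 4) ≠ (a, b) →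
      ((i, j) : Fin 4 × Fin 4) ≠ (c, d) → dir (p i - p j) ≠ s) :
    {q : Fin 4 × Fin 4 | q.1 < q.2 ∧ dir (p q.1 - p q.2) = s}.ncard = 2 := by
  have hset : {q : Fin 4 × Fin 4 | q.1 < q.2 ∧ dir (p q.1 - p q.2) = s}
      = {(a, b), (c, d)} := by
    ext ⟨i, j⟩
    simp only [Set.mem_setOf_eq, Set.mem_insert_iff, Set.mem_singleton_iff]
    constructor
    · rintro ⟨hlt, heq⟩
      by_contra hcon
      push_neg at hcon
      exact hother i j hlt hcon.1 hcon.2 heq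
    · rintro (h | h) <;>
        (rw [Prod.ext_iff] at h; obtain ⟨rfl, rfl⟩ := h)
      · exact ⟨hab, h1⟩
      · exact ⟨hcd, h2⟩
  rw [hset, Set.ncard_pair hne]

/-- In a straight-line drawing of `K₄` using only four slopes, two of the slopes are each
used by exactly two edges, and these four edges form a 4-cycle; consequently the vertices
form a parallelogram. -/
theorem K4_four_slopes_parallelogram (p : Fin 4 → ℝ × ℝ) (hinj : Function.Injective p)
    (hgp : ∀ i j k : Fin 4, i ≠ j → j ≠ k → i ≠ k →
      ¬ Collinear ℝ ({p i, p j, p k} : Set (ℝ × ℝ)))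
    (S : Set (Projectivization ℝ (ℝ × ℝ))) (hS : S.ncard = 4)
    (huse : ∀ i j : Fin 4, i ≠ j → dir (p i - p j) ∈ S) :
    ∃ s₁ s₂, s₁ ∈ S ∧ s₂ ∈ S ∧ s₁ ≠ s₂ ∧
      {q : Fin 4 × Fin 4 | q.1 < q.2 ∧ dir (p q.1 - p q.2) = s₁}.ncard = 2 ∧
      {q : Fin 4 × Fin 4 | q.1 < q.2 ∧ dir (p q.1 - p q.2) = s₂}.ncard = 2 ∧
      ∃ σ : Equiv.Perm (Fin 4),
        dir (p (σ 0) - p (σ 1)) = s₁ ∧ dir (p (σ 2) - p (σ 3)) = s₁ ∧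
        dir (p (σ 1) - p (σ 2)) = s₂ ∧ dir (p (σ 3) - p (σ 0)) = s₂ ∧
        p (σ 0) + p (σ 2) = p (σ 1) + p (σ 3) := by
  have hnp : ∀ i j : Fin 4, i ≠ j → p i - p j ≠ 0 := fun i j h =>
    sub_ne_zero.2 (hinj.ne h)
  have hsymm : ∀ i j : Fin 4, i ≠ j → dir (p i - p j) = dir (p j - p i) := by
    intro i j h
    rw [dir_eq_iff (hnp i j h) (hnp j i h.symm)]
    exact ⟨-1, by norm_num, by module⟩
  have hinc : ∀ i j k : Fin 4, i ≠ j → j ≠ k → i ≠ k →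
      dir (p i - p j) ≠ dir (p i - p k) := by
    intro i j k hij hjk hik he
    obtain ⟨a, ha0, ha⟩ := (dir_eq_iff (hnp i j hij) (hnp i k hik)).1 he
    have key : (1 : ℝ) • (p j - p i) + (-a) • (p k - p i) = 0 := by
      linear_combination (norm := module) -ha
    exact one_ne_zero (lindep (hgp i j k hij hjk hik) 1 (-a) key).1
  have e01_02 : dir (p 0 - p 1) ≠ dir (p 0 - p 2) :=
    hinc 0 1 2 (by decide) (by decide) (by decide)
  have e01_03 : dir (p 0 - p 1) ≠ dir (p 0 - p 3) :=
    hinc 0 1 3 (by decide) (by decide) (by decide)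
  have e02_03 : dir (p 0 - p 2) ≠ dir (p 0 - p 3) :=
    hinc 0 2 3 (by decide) (by decide) (by decide)
  have e12_13 : dir (p 1 - p 2) ≠ dir (p 1 - p 3) :=
    hinc 1 2 3 (by decide) (by decide) (by decide)
  have e01_12 : dir (p 0 - p 1) ≠ dir (p 1 - p 2) := by
    rw [hsymm 0 1 (by decide)]; exact hinc 1 0 2 (by decide) (by decide) (by decide)
  have e01_13 : dir (p 0 - p 1) ≠ dir (p 1 - p 3) := by
    rw [hsymm 0 1 (by decide)]; exact hinc 1 0 3 (by decide) (by decide) (by decide)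
  have e02_12 : dir (p 0 - p 2) ≠ dir (p 1 - p 2) := by
    rw [hsymm 0 2 (by decide), hsymm 1 2 (by decide)]
    exact hinc 2 0 1 (by decide) (by decide) (by decide)
  have e02_23 : dir (p 0 - p 2) ≠ dir (p 2 - p 3) := by
    rw [hsymm 0 2 (by decide)]; exact hinc 2 0 3 (by decide) (by decide) (by decide)
  have e12_23 : dir (p 1 - p 2) ≠ dir (p 2 - p 3) := by
    rw [hsymm 1 2 (by decide)]; exact hinc 2 1 3 (by decide) (by decide) (by decide)
  have e03_13 : dir (p 0 - p 3) ≠ dir (p 1 - p 3) := by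
    rw [hsymm 0 3 (by decide), hsymm 1 3 (by decide)]
    exact hinc 3 0 1 (by decide) (by decide) (by decide)
  have e03_23 : dir (p 0 - p 3) ≠ dir (p 2 - p 3) := by
    rw [hsymm 0 3 (by decide), hsymm 2 3 (by decide)]
    exact hinc 3 0 2 (by decide) (by decide) (by decide)
  have e13_23 : dir (p 1 - p 3) ≠ dir (p 2 - p 3) := by
    rw [hsymm 1 3 (by decide), hsymm 2 3 (by decide)]
    exact hinc 3 1 2 (by decide) (by decide) (by decide)
  by_cases hx : dir (p 0 - p 1) = dir (p 2 - p 3)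
  · by_cases hy : dir (p 0 - p 2) = dir (p 1 - p 3)
    · -- case XY : s₁ = d01 = d23, s₂ = d02 = d13
      refine ⟨dir (p 0 - p 1), dir (p 0 - p 2), huse 0 1 (by decide), huse 0 2 (by decide),
        e01_02, ?_, ?_, Equiv.swap 2 3, ?_, ?_, ?_, ?_, ?_⟩
      · refine edge_set_eq p _ 0 1 2 3 (by decide) (by decide) (by decide) rfl hx.symm ?_
        intro i j hlt h1 h2
        fin_cases i <;> fin_cases j <;>
          first
          | exact absurd hlt (by decide)
          | exact absurd rfl h1
          | exact absurd rfl h2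
          | exact e01_02.symm
          | exact e01_03.symm
          | exact e01_12.symm
          | exact e01_13.symm
      · refine edge_set_eq p _ 0 2 1 3 (by decide) (by decide) (by decide) rfl hy.symm ?_
        intro i j hlt h1 h2
        fin_cases i <;> fin_cases j <;>
          first
          | exact absurd hlt (by decide)
          | exact absurd rfl h1
          | exact absurd rfl h2
          | exact e01_02
          | exact e02_03.symm
          | exact e02_12.symm
          | exact e02_23.symm
      · rw [show (Equiv.swap (2 : Fin 4) 3) 0 = 0 from by decide,
            show (Equiv.swap (2 : Fin 4) 3) 1 = 1 from by decide]
      · rw [show (Equiv.swap (2 : Fin 4) 3) 2 = 3 from by decide,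
            show (Equiv.swap (2 : Fin 4) 3) 3 = 2 from by decide]
        exact (hsymm 2 3 (by decide)).symm.trans hx.symm
      · rw [show (Equiv.swap (2 : Fin 4) 3) 1 = 1 from by decide,
            show (Equiv.swap (2 : Fin 4) 3) 2 = 3 from by decide]
        exact hy.symm
      · rw [show (Equiv.swap (2 : Fin 4) 3) 3 = 2 from by decide,
            show (Equiv.swap (2 : Fin 4) 3) 0 = 0 from by decide]
        exact (hsymm 0 2 (by decide)).symm
      · rw [show (Equiv.swap (2 : Fin 4) 3) 0 = 0 from by decide,
            show (Equiv.swap (2 : Fin 4) 3) 1 = 1 from by decide,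
            show (Equiv.swap (2 : Fin 4) 3) 2 = 3 from by decide,
            show (Equiv.swap (2 : Fin 4) 3) 3 = 2 from by decide]
        obtain ⟨a, ha0, ha⟩ := (dir_eq_iff (hnp 0 1 (by decide)) (hnp 2 3 (by decide))).1 hx
        obtain ⟨b, hb0, hb⟩ := (dir_eq_iff (hnp 0 2 (by decide)) (hnp 1 3 (by decide))).1 hy
        have key : (1 - b) • (p 1 - p 3) + (a - 1) • (p 2 - p 3) = 0 := by
          linear_combination (norm := module) hb - ha
        obtain ⟨k1, k2⟩ := lindep (hgp 3 1 2 (by decide) (by decide) (by decide)) _ _ key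
        have ha1 : a = 1 := by linarith
        rw [ha1, one_smul] at ha
        linear_combination (norm := module) ha
    · by_cases hz : dir (p 0 - p 3) = dir (p 1 - p 2)
      · -- case XZ : s₁ = d01 = d23, s₂ = d03 = d12, σ = 1
        refine ⟨dir (p 0 - p 1), dir (p 0 - p 3), huse 0 1 (by decide), huse 0 3 (by decide),
          e01_03, ?_, ?_, 1, ?_, ?_, ?_, ?_, ?_⟩
        · refine edge_set_eq p _ 0 1 2 3 (by decide) (by decide) (by decide) rfl hx.symm ?_
          intro i j hlt h1 h2
          fin_cases i <;> fin_cases j <;>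
            first
            | exact absurd hlt (by decide)
            | exact absurd rfl h1
            | exact absurd rfl h2
            | exact e01_02.symm
            | exact e01_03.symm
            | exact e01_12.symm
            | exact e01_13.symm
        · refine edge_set_eq p _ 0 3 1 2 (by decide) (by decide) (by decide) rfl hz.symm ?_
          intro i j hlt h1 h2
          fin_cases i <;> fin_cases j <;>
            first
            | exact absurd hlt (by decide)
            | exact absurd rfl h1
            | exact absurd rfl h2
            | exact e01_03
            | exact e02_03
            | exact e03_13.symm
            | exact e03_23.symm
        · rfl
        · exact hx.symm
        · exact hz.symm
        · exact (hsymm 0 3 (by decide)).symm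
        · show p 0 + p 2 = p 1 + p 3
          obtain ⟨a, ha0, ha⟩ :=
            (dir_eq_iff (hnp 0 1 (by decide)) (hnp 2 3 (by decide))).1 hx
          obtain ⟨c, hc0, hc⟩ :=
            (dir_eq_iff (hnp 0 3 (by decide)) (hnp 1 2 (by decide))).1 hz
          have key : (1 - c) • (p 1 - p 2) + (-(a + 1)) • (p 3 - p 2) = 0 := by
            linear_combination (norm := module) hc - ha
          obtain ⟨k1, k2⟩ := lindep (hgp 2 1 3 (by decide) (by decide) (by decide)) _ _ key
          have ha1 : a = -1 := by linarith
          rw [ha1] at ha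
          have ha' : p 0 - p 1 = -(p 2 - p 3) := by rw [ha]; module
          linear_combination (norm := module) ha'
      · -- contradiction: ¬hy ∧ ¬hz with hx
        exact absurd hS (fun hS => five_le (huse 0 2 (by decide)) (huse 1 3 (by decide))
          (huse 0 3 (by decide)) (huse 1 2 (by decide)) (huse 0 1 (by decide))
          hy e02_03 e02_12 e01_02.symm e03_13.symm e12_13.symm e01_13.symm hz
          e01_03.symm e01_12.symm hS)
  · by_cases hy : dir (p 0 - p 2) = dir (p 1 - p 3)
    · by_cases hz : dir (p 0 - p 3) = dir (p 1 - p 2)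
      · -- case YZ : s₁ = d02 = d13, s₂ = d03 = d12, σ = swap 1 2
        refine ⟨dir (p 0 - p 2), dir (p 0 - p 3), huse 0 2 (by decide), huse 0 3 (by decide),
          e02_03, ?_, ?_, Equiv.swap 1 2, ?_, ?_, ?_, ?_, ?_⟩
        · refine edge_set_eq p _ 0 2 1 3 (by decide) (by decide) (by decide) rfl hy.symm ?_
          intro i j hlt h1 h2
          fin_cases i <;> fin_cases j <;>
            first
            | exact absurd hlt (by decide)
            | exact absurd rfl h1
            | exact absurd rfl h2
            | exact e01_02
            | exact e02_03.symm
            | exact e02_12.symm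
            | exact e02_23.symm
        · refine edge_set_eq p _ 0 3 1 2 (by decide) (by decide) (by decide) rfl hz.symm ?_
          intro i j hlt h1 h2
          fin_cases i <;> fin_cases j <;>
            first
            | exact absurd hlt (by decide)
            | exact absurd rfl h1
            | exact absurd rfl h2
            | exact e01_03
            | exact e02_03
            | exact e03_13.symm
            | exact e03_23.symm
        · rw [show (Equiv.swap (1 : Fin 4) 2) 0 = 0 from by decide,
              show (Equiv.swap (1 : Fin 4) 2) 1 = 2 from by decide]
        · rw [show (Equiv.swap (1 : Fin 4) 2) 2 = 1 from by decide,
              show (Equiv.swap (1 : Fin 4) 2) 3 = 3 from by decide]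
          exact hy.symm
        · rw [show (Equiv.swap (1 : Fin 4) 2) 1 = 2 from by decide,
              show (Equiv.swap (1 : Fin 4) 2) 2 = 1 from by decide]
          exact (hsymm 1 2 (by decide)).symm.trans hz.symm
        · rw [show (Equiv.swap (1 : Fin 4) 2) 3 = 3 from by decide,
              show (Equiv.swap (1 : Fin 4) 2) 0 = 0 from by decide]
          exact (hsymm 0 3 (by decide)).symm
        · rw [show (Equiv.swap (1 : Fin 4) 2) 0 = 0 from by decide,
              show (Equiv.swap (1 : Fin 4) 2) 1 = 2 from by decide,
              show (Equiv.swap (1 : Fin 4) 2) 2 = 1 from by decide,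
              show (Equiv.swap (1 : Fin 4) 2) 3 = 3 from by decide]
          obtain ⟨b, hb0, hb⟩ :=
            (dir_eq_iff (hnp 0 2 (by decide)) (hnp 1 3 (by decide))).1 hy
          obtain ⟨c, hc0, hc⟩ :=
            (dir_eq_iff (hnp 0 3 (by decide)) (hnp 1 2 (by decide))).1 hz
          have key : (1 + c) • (p 2 - p 1) + (-(1 + b)) • (p 3 - p 1) = 0 := by
            linear_combination (norm := module) hc - hb
          obtain ⟨k1, k2⟩ := lindep (hgp 1 2 3 (by decide) (by decide) (by decide)) _ _ key
          have hb1 : b = -1 := by linarith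
          rw [hb1] at hb
          have hb' : p 0 - p 2 = -(p 1 - p 3) := by rw [hb]; module
          linear_combination (norm := module) hb'
      · -- contradiction: ¬hx ∧ ¬hz
        exact absurd hS (fun hS => five_le (huse 0 1 (by decide)) (huse 2 3 (by decide))
          (huse 0 3 (by decide)) (huse 1 2 (by decide)) (huse 0 2 (by decide))
          hx e01_03 e01_12 e01_02 e03_23.symm e12_23.symm e02_23.symm hz
          e02_03.symm e02_12.symm hS)
    · -- contradiction: ¬hx ∧ ¬hy
      exact absurd hS (fun hS => five_le (huse 0 1 (by decide)) (huse 2 3 (by decide))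
        (huse 0 2 (by decide)) (huse 1 3 (by decide)) (huse 0 3 (by decide))
        hx e01_02 e01_13 e01_03 e02_23.symm e13_23.symm e03_23.symm hy
        e02_03 e03_13.symm hS)
end

section
/- A set S of four slopes admits a straight-line drawing of K₄ using only slopes from S if and only if S is the image of the four basic slopes {0, π/4, π/2, 3π/4} under an invertible affine transformation of the plane. -/
namespace K4Aux

/-- The cross product (determinant) of two planar vectors. -/
def cross (u v : ℝ × ℝ) : ℝ := u.1 * v.2 - u.2 * v.1

lemma ne_zero_left {u v : ℝ × ℝ} (h : cross u v ≠ 0) : u ≠ 0 := by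
  rintro rfl; simp [cross] at h

lemma ne_zero_right {u v : ℝ × ℝ} (h : cross u v ≠ 0) : v ≠ 0 := by
  rintro rfl; simp [cross] at h

lemma dir_eq_iff {u v : ℝ × ℝ} (hu : u ≠ 0) (hv : v ≠ 0) :
    dir u = dir v ↔ ∃ c : ℝ, c • v = u := by
  rw [dir, dir, dif_neg hu, dif_neg hv, Projectivization.mk_eq_mk_iff']

lemma dir_neg (v : ℝ × ℝ) : dir (-v) = dir v := by
  by_cases h : v = 0
  · simp [h]
  · rw [dir_eq_iff (neg_ne_zero.mpr h) h]
    exact ⟨-1, by simp⟩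

lemma dir_sub_comm (x y : ℝ × ℝ) : dir (x - y) = dir (y - x) := by
  rw [← neg_sub y x, dir_neg]

lemma dir_ne_of_cross {u v : ℝ × ℝ} (h : cross u v ≠ 0) : dir u ≠ dir v := by
  intro he
  obtain ⟨c, hc⟩ := (dir_eq_iff (ne_zero_left h) (ne_zero_right h)).1 he
  apply h
  rw [← hc]
  simp only [cross, Prod.smul_fst, Prod.smul_snd, smul_eq_mul]
  ring

lemma exists_smul_of_cross_eq_zero {w z : ℝ × ℝ} (hz : z ≠ 0) (h : cross w z = 0) :
    ∃ r : ℝ, w = r • z := by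
  have hq : z.1 ^ 2 + z.2 ^ 2 ≠ 0 := by
    intro hzq
    apply hz
    have h1 : z.1 = 0 := by nlinarith [sq_nonneg z.1, sq_nonneg z.2]
    have h2 : z.2 = 0 := by nlinarith [sq_nonneg z.1, sq_nonneg z.2]
    exact Prod.ext h1 h2
  have hcr : w.1 * z.2 - w.2 * z.1 = 0 := h
  refine ⟨(w.1 * z.1 + w.2 * z.2) / (z.1 ^ 2 + z.2 ^ 2), ?_⟩
  apply Prod.ext
  · show w.1 = _
    rw [Prod.smul_fst, smul_eq_mul]
    field_simp
    linear_combination z.2 * hcr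
  · show w.2 = _
    rw [Prod.smul_snd, smul_eq_mul]
    field_simp
    linear_combination (-z.1) * hcr

lemma collinear_triple_iff {a b c : ℝ × ℝ} :
    Collinear ℝ ({a, b, c} : Set (ℝ × ℝ)) ↔ cross (b - a) (c - a) = 0 := by
  rw [collinear_iff_of_mem (Set.mem_insert a _)]
  constructor
  · rintro ⟨v, hv⟩
    obtain ⟨rb, hb⟩ := hv b (by simp)
    obtain ⟨rc, hc⟩ := hv c (by simp)
    rw [hb, hc]
    simp only [cross, vadd_eq_add, Prod.smul_fst, Prod.smul_snd, Prod.fst_add, Prod.snd_add,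
      smul_eq_mul, add_sub_cancel_right]
    ring
  · intro h
    by_cases hv : c - a = 0
    · refine ⟨b - a, ?_⟩
      rintro p hp
      rcases hp with rfl | rfl | rfl
      · exact ⟨0, by simp⟩
      · exact ⟨1, by simp⟩
      · exact ⟨0, by simpa [eq_comm] using sub_eq_zero.mp hv⟩
    · refine ⟨c - a, ?_⟩
      rintro p hp
      have hq : (c - a).1 ^ 2 + (c - a).2 ^ 2 ≠ 0 := by
        intro hz
        apply hv
        have h1 : (c - a).1 = 0 := by nlinarith [sq_nonneg (c - a).1, sq_nonneg (c - a).2]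
        have h2 : (c - a).2 = 0 := by nlinarith [sq_nonneg (c - a).1, sq_nonneg (c - a).2]
        exact Prod.ext h1 h2
      rcases hp with rfl | rfl | rfl
      · exact ⟨0, by simp⟩
      · obtain ⟨r, hr⟩ := exists_smul_of_cross_eq_zero hv h
        exact ⟨r, by rw [vadd_eq_add, ← hr]; abel⟩
      · exact ⟨1, by simp⟩

lemma cross_ne_of_noncol {a b c : ℝ × ℝ} (h : ¬ Collinear ℝ ({a, b, c} : Set (ℝ × ℝ))) :
    cross (b - a) (c - a) ≠ 0 :=
  fun hc => h (collinear_triple_iff.2 hc)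

lemma noncol_of_cross_ne {a b c : ℝ × ℝ} (h : cross (b - a) (c - a) ≠ 0) :
    ¬ Collinear ℝ ({a, b, c} : Set (ℝ × ℝ)) :=
  fun hc => h (collinear_triple_iff.1 hc)

lemma collinear_of_image (T : (ℝ × ℝ) ≃ᵃ[ℝ] (ℝ × ℝ)) {x y z : ℝ × ℝ}
    (h : Collinear ℝ ({T x, T y, T z} : Set (ℝ × ℝ))) :
    Collinear ℝ ({x, y, z} : Set (ℝ × ℝ)) := by
  rw [collinear_iff_of_mem (Set.mem_insert (T x) _)] at h
  obtain ⟨v, hv⟩ := h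
  rw [collinear_iff_of_mem (Set.mem_insert x _)]
  refine ⟨T.linear.symm v, ?_⟩
  intro p hp
  obtain ⟨r, hr⟩ : ∃ r : ℝ, T p = r • v +ᵥ T x := by
    refine hv (T p) ?_
    rcases hp with rfl | rfl | rfl <;> simp
  refine ⟨r, ?_⟩
  have h2 : T.linear (p -ᵥ x) = T p -ᵥ T x := by
    simpa using AffineMap.linearMap_vsub (T : (ℝ × ℝ) →ᵃ[ℝ] (ℝ × ℝ)) p x
  have h3 : T.linear (p -ᵥ x) = r • v := by rw [h2, hr]; simp
  have h4 : p -ᵥ x = T.linear.symm (r • v) := by rw [← h3, LinearEquiv.symm_apply_apply]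
  have h5 : p - x = r • T.linear.symm v := by
    rw [vsub_eq_sub] at h4
    rw [h4, map_smul]
  rw [vadd_eq_add, ← h5]
  abel

lemma ncard_four {α : Type*} {x1 x2 x3 x4 : α}
    (d12 : x1 ≠ x2) (d13 : x1 ≠ x3) (d14 : x1 ≠ x4)
    (d23 : x2 ≠ x3) (d24 : x2 ≠ x4) (d34 : x3 ≠ x4) :
    ({x1, x2, x3, x4} : Set α).ncard = 4 := by
  rw [Set.ncard_insert_of_notMem (by simp [d12, d13, d14]),
    Set.ncard_insert_of_notMem (by simp [d23, d24]),
    Set.ncard_insert_of_notMem (by simp [d34]), Set.ncard_singleton]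

lemma ncard_five {α : Type*} {x1 x2 x3 x4 x5 : α}
    (d12 : x1 ≠ x2) (d13 : x1 ≠ x3) (d14 : x1 ≠ x4) (d15 : x1 ≠ x5)
    (d23 : x2 ≠ x3) (d24 : x2 ≠ x4) (d25 : x2 ≠ x5)
    (d34 : x3 ≠ x4) (d35 : x3 ≠ x5) (d45 : x4 ≠ x5) :
    ({x1, x2, x3, x4, x5} : Set α).ncard = 5 := by
  rw [Set.ncard_insert_of_notMem (by simp [d12, d13, d14, d15]),
    Set.ncard_insert_of_notMem (by simp [d23, d24, d25]),
    Set.ncard_insert_of_notMem (by simp [d34, d35]),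
    Set.ncard_insert_of_notMem (by simp [d45]), Set.ncard_singleton]

lemma five_absurd {α : Type*} {S : Set α} (hS : S.ncard = 4) {x1 x2 x3 x4 x5 : α}
    (h1 : x1 ∈ S) (h2 : x2 ∈ S) (h3 : x3 ∈ S) (h4 : x4 ∈ S) (h5 : x5 ∈ S)
    (d12 : x1 ≠ x2) (d13 : x1 ≠ x3) (d14 : x1 ≠ x4) (d15 : x1 ≠ x5)
    (d23 : x2 ≠ x3) (d24 : x2 ≠ x4) (d25 : x2 ≠ x5)
    (d34 : x3 ≠ x4) (d35 : x3 ≠ x5) (d45 : x4 ≠ x5) : False := by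
  have hfin : S.Finite := Set.finite_of_ncard_ne_zero (by rw [hS]; norm_num)
  have hsub : ({x1, x2, x3, x4, x5} : Set α) ⊆ S := by
    intro x hx
    rcases hx with rfl | rfl | rfl | rfl | rfl <;> assumption
  have hle := Set.ncard_le_ncard hsub hfin
  rw [hS, ncard_five d12 d13 d14 d15 d23 d24 d25 d34 d35 d45] at hle
  omega

/-- Key construction: if the four points form a configuration in which the pairs
`ab ∥ cd` and `ac ∥ bd` are parallel, then `S` is an affine image of the basic slopes. -/
lemma key (S : Set (Projectivization ℝ (ℝ × ℝ))) (hS : S.ncard = 4) (a b c d : ℝ × ℝ)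
    (habc : ¬ Collinear ℝ ({a, b, c} : Set (ℝ × ℝ)))
    (hdc : d ≠ c) (hdb : d ≠ b)
    (hE1 : dir (b - a) = dir (d - c))
    (hE2 : dir (c - a) = dir (d - b))
    (m1 : dir (b - a) ∈ S) (m2 : dir (c - a) ∈ S)
    (m3 : dir (d - a) ∈ S) (m4 : dir (c - b) ∈ S) :
    ∃ T : (ℝ × ℝ) ≃ᵃ[ℝ] (ℝ × ℝ),
      S = {dir (T.linear (1, 0)), dir (T.linear (1, 1)), dir (T.linear (0, 1)),
           dir (T.linear (-1, 1))} := by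
  set u := b - a with hu
  set v := c - a with hv
  have hcr : cross u v ≠ 0 := cross_ne_of_noncol habc
  have hu0 : u ≠ 0 := ne_zero_left hcr
  have hv0 : v ≠ 0 := ne_zero_right hcr
  -- extract the scalars from the parallelism hypotheses
  obtain ⟨α, hα⟩ := (dir_eq_iff (sub_ne_zero.mpr hdc) hu0).1 hE1.symm
  obtain ⟨β, hβ⟩ := (dir_eq_iff (sub_ne_zero.mpr hdb) hv0).1 hE2.symm
  -- component equations
  have hα1f := congrArg Prod.fst hα
  have hα2f := congrArg Prod.snd hα
  have hβ1f := congrArg Prod.fst hβ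
  have hβ2f := congrArg Prod.snd hβ
  simp only [Prod.smul_fst, Prod.smul_snd, Prod.fst_sub, Prod.snd_sub, smul_eq_mul] at hα1f hα2f hβ1f hβ2f
  have hu1 : u.1 = b.1 - a.1 := by simp [hu]
  have hu2 : u.2 = b.2 - a.2 := by simp [hu]
  have hv1 : v.1 = c.1 - a.1 := by simp [hv]
  have hv2 : v.2 = c.2 - a.2 := by simp [hv]
  have e1 : α * u.1 - u.1 = β * v.1 - v.1 := by
    linear_combination hα1f - hβ1f - hu1 + hv1
  have e2 : α * u.2 - u.2 = β * v.2 - v.2 := by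
    linear_combination hα2f - hβ2f - hu2 + hv2
  have hα1 : α = 1 := by
    have hz : (α - 1) * (u.1 * v.2 - u.2 * v.1) = 0 := by
      linear_combination v.2 * e1 - v.1 * e2
    rcases mul_eq_zero.mp hz with h | h
    · linarith
    · exact absurd h hcr
  have hda : d - a = u + v := by
    have h1 : d - a = (d - c) + (c - a) := by abel
    rw [h1, ← hα, hα1, one_smul, ← hv]
  have hcb : c - b = v - u := by rw [hu, hv]; abel
  have m3' : dir (u + v) ∈ S := by rw [← hda]; exact m3
  have m4' : dir (v - u) ∈ S := by rw [← hcb]; exact m4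
  -- the four slopes are pairwise distinct
  have cr1 : cross u (u + v) ≠ 0 := by
    have : cross u (u + v) = cross u v := by simp only [cross, Prod.fst_add, Prod.snd_add]; ring
    rw [this]; exact hcr
  have cr2 : cross u (v - u) ≠ 0 := by
    have : cross u (v - u) = cross u v := by simp only [cross, Prod.fst_sub, Prod.snd_sub]; ring
    rw [this]; exact hcr
  have cr3 : cross (u + v) v ≠ 0 := by
    have : cross (u + v) v = cross u v := by simp only [cross, Prod.fst_add, Prod.snd_add]; ring
    rw [this]; exact hcr
  have cr4 : cross (u + v) (v - u) ≠ 0 := by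
    have : cross (u + v) (v - u) = 2 * cross u v := by
      simp only [cross, Prod.fst_add, Prod.snd_add, Prod.fst_sub, Prod.snd_sub]; ring
    rw [this]
    exact mul_ne_zero two_ne_zero hcr
  have cr5 : cross v (v - u) ≠ 0 := by
    have : cross v (v - u) = cross u v := by simp only [cross, Prod.fst_sub, Prod.snd_sub]; ring
    rw [this]; exact hcr
  have d12 : dir u ≠ dir (u + v) := dir_ne_of_cross cr1
  have d13 : dir u ≠ dir v := dir_ne_of_cross hcr
  have d14 : dir u ≠ dir (v - u) := dir_ne_of_cross cr2
  have d23 : dir (u + v) ≠ dir v := dir_ne_of_cross cr3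
  have d24 : dir (u + v) ≠ dir (v - u) := dir_ne_of_cross cr4
  have d34 : dir v ≠ dir (v - u) := dir_ne_of_cross cr5
  -- S is exactly the set of these four slopes
  have hsub : ({dir u, dir (u + v), dir v, dir (v - u)} :
      Set (Projectivization ℝ (ℝ × ℝ))) ⊆ S := by
    intro x hx
    rcases hx with rfl | rfl | rfl | rfl
    · exact m1
    · exact m3'
    · exact m2
    · exact m4'
  have hfin : S.Finite := Set.finite_of_ncard_ne_zero (by rw [hS]; norm_num)
  have hc4 : ({dir u, dir (u + v), dir v, dir (v - u)} :
      Set (Projectivization ℝ (ℝ × ℝ))).ncard = 4 := ncard_four d12 d13 d14 d23 d24 d34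
  have hSet : ({dir u, dir (u + v), dir v, dir (v - u)} :
      Set (Projectivization ℝ (ℝ × ℝ))) = S :=
    Set.eq_of_subset_of_ncard_le hsub (by rw [hS, hc4]) hfin
  -- construct the affine transformation
  let f : (ℝ × ℝ) →ₗ[ℝ] (ℝ × ℝ) :=
    { toFun := fun w => w.1 • u + w.2 • v
      map_add' := by
        intro x y
        simp only [Prod.fst_add, Prod.snd_add, add_smul]
        abel
      map_smul' := by
        intro r x
        simp only [Prod.smul_fst, Prod.smul_snd, smul_eq_mul, RingHom.id_apply, smul_add,
          mul_smul] }
  have hker : ∀ w : ℝ × ℝ, f w = 0 → w = 0 := by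
    intro w hw
    have h1 : w.1 * u.1 + w.2 * v.1 = 0 := by
      have := congrArg Prod.fst hw
      simpa [f, Prod.fst_add] using this
    have h2 : w.1 * u.2 + w.2 * v.2 = 0 := by
      have := congrArg Prod.snd hw
      simpa [f, Prod.snd_add] using this
    have hw1 : w.1 * (u.1 * v.2 - u.2 * v.1) = 0 := by
      linear_combination v.2 * h1 - v.1 * h2
    have hw2 : w.2 * (u.1 * v.2 - u.2 * v.1) = 0 := by
      linear_combination u.1 * h2 - u.2 * h1
    have hz1 : w.1 = 0 := by
      rcases mul_eq_zero.mp hw1 with h | h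
      · exact h
      · exact absurd h hcr
    have hz2 : w.2 = 0 := by
      rcases mul_eq_zero.mp hw2 with h | h
      · exact h
      · exact absurd h hcr
    exact Prod.ext hz1 hz2
  have hinj : Function.Injective f := by
    intro x y hxy
    have : x - y = 0 := hker (x - y) (by rw [map_sub, hxy, sub_self])
    exact sub_eq_zero.mp this
  have hsurj : Function.Surjective f :=
    (LinearMap.injective_iff_surjective_of_finrank_eq_finrank rfl).mp hinj
  let e : (ℝ × ℝ) ≃ₗ[ℝ] (ℝ × ℝ) := LinearEquiv.ofBijective f ⟨hinj, hsurj⟩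
  refine ⟨e.toAffineEquiv, ?_⟩
  have hT : ∀ w : ℝ × ℝ, e.toAffineEquiv.linear w = w.1 • u + w.2 • v := fun w => rfl
  have h10 : e.toAffineEquiv.linear (1, 0) = u := by rw [hT]; norm_num
  have h11 : e.toAffineEquiv.linear (1, 1) = u + v := by rw [hT]; norm_num
  have h01 : e.toAffineEquiv.linear (0, 1) = v := by rw [hT]; norm_num
  have hm11 : e.toAffineEquiv.linear (-1, 1) = v - u := by
    rw [hT]
    norm_num
    abel
  rw [h10, h11, h01, hm11]
  exact hSet.symm

end K4Aux

open K4Aux in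
/-- A set of four slopes admits a straight-line drawing of `K₄` if and only if it is the
image of the four basic slopes under an invertible affine transformation of the plane. -/
theorem K4_drawable_iff_affine_image_basic (S : Set (Projectivization ℝ (ℝ × ℝ)))
    (hS : S.ncard = 4) :
    (∃ p : Fin 4 → ℝ × ℝ, Function.Injective p ∧
      (∀ i j k : Fin 4, i ≠ j → j ≠ k → i ≠ k →
        ¬ Collinear ℝ ({p i, p j, p k} : Set (ℝ × ℝ))) ∧
      (∀ i j : Fin 4, i ≠ j → dir (p i - p j) ∈ S)) ↔
    (∃ T : (ℝ × ℝ) ≃ᵃ[ℝ] (ℝ × ℝ),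
      S = {dir (T.linear (1, 0)), dir (T.linear (1, 1)), dir (T.linear (0, 1)),
           dir (T.linear (-1, 1))}) := by
  constructor
  · rintro ⟨p, hinj, hncol, hmem⟩
    -- slopes with both orientations
    have scomm : ∀ i j : Fin 4, dir (p i - p j) = dir (p j - p i) := fun i j =>
      dir_sub_comm (p i) (p j)
    -- slopes at a common vertex are distinct
    have W : ∀ i j k : Fin 4, i ≠ j → j ≠ k → i ≠ k →
        dir (p j - p i) ≠ dir (p k - p i) := fun i j k hij hjk hik =>
      dir_ne_of_cross (cross_ne_of_noncol (hncol i j k hij hjk hik))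
    have hne : ∀ i j : Fin 4, i ≠ j → p i ≠ p j := fun i j hij h => hij (hinj h)
    by_cases hA : dir (p 1 - p 0) = dir (p 3 - p 2)
    · by_cases hB : dir (p 2 - p 0) = dir (p 3 - p 1)
      · -- parallelogram a b d c with a = p0, b = p1, c = p2, d = p3
        exact key S hS (p 0) (p 1) (p 2) (p 3)
          (hncol 0 1 2 (by decide) (by decide) (by decide))
          (hne 3 2 (by decide)) (hne 3 1 (by decide)) hA hB
          (hmem 1 0 (by decide)) (hmem 2 0 (by decide)) (hmem 3 0 (by decide))
          (hmem 2 1 (by decide))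
      · by_cases hC : dir (p 3 - p 0) = dir (p 2 - p 1)
        · -- use points a = p0, b = p1, c = p3, d = p2
          refine key S hS (p 0) (p 1) (p 3) (p 2)
            (hncol 0 1 3 (by decide) (by decide) (by decide))
            (hne 2 3 (by decide)) (hne 2 1 (by decide)) ?_ ?_
            (hmem 1 0 (by decide)) (hmem 3 0 (by decide)) (hmem 2 0 (by decide))
            (hmem 3 1 (by decide))
          · rw [hA]; exact scomm 3 2
          · exact hC
        · -- contradiction: five distinct slopes in S
          exact absurd (rfl : (0:Nat) = 0) (fun _ => (five_absurd hS
            (hmem 2 0 (by decide)) (hmem 1 0 (by decide)) (hmem 3 0 (by decide))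
            (hmem 3 1 (by decide)) (hmem 2 1 (by decide))
            -- d12 : s02 ≠ s01
            (W 0 2 1 (by decide) (by decide) (by decide))
            -- d13 : s02 ≠ s03
            (W 0 2 3 (by decide) (by decide) (by decide))
            -- d14 : s02 ≠ s13
            hB
            -- d15 : s02 ≠ s12
            (by rw [scomm 2 0, scomm 2 1]; exact W 2 0 1 (by decide) (by decide) (by decide))
            -- d23 : s01 ≠ s03
            (W 0 1 3 (by decide) (by decide) (by decide))
            -- d24 : s01 ≠ s13
            (by rw [scomm 1 0]; exact W 1 0 3 (by decide) (by decide) (by decide))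
            -- d25 : s01 ≠ s12
            (by rw [scomm 1 0]; exact W 1 0 2 (by decide) (by decide) (by decide))
            -- d34 : s03 ≠ s13
            (by rw [scomm 3 0, scomm 3 1]
                exact W 3 0 1 (by decide) (by decide) (by decide))
            -- d35 : s03 ≠ s12
            hC
            -- d45 : s13 ≠ s12
            (W 1 3 2 (by decide) (by decide) (by decide))))
    · by_cases hB : dir (p 2 - p 0) = dir (p 3 - p 1)
      · by_cases hC : dir (p 3 - p 0) = dir (p 2 - p 1)
        · -- use points a = p0, b = p2, c = p3, d = p1
          refine key S hS (p 0) (p 2) (p 3) (p 1)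
            (hncol 0 2 3 (by decide) (by decide) (by decide))
            (hne 1 3 (by decide)) (hne 1 2 (by decide)) ?_ ?_
            (hmem 2 0 (by decide)) (hmem 3 0 (by decide)) (hmem 1 0 (by decide))
            (hmem 3 2 (by decide))
          · rw [hB]; exact scomm 3 1
          · rw [hC]; exact scomm 2 1
        · -- ¬hA, ¬hC : contradiction with {s01, s02, s03, s23, s12}
          exact absurd (rfl : (0:Nat) = 0) (fun _ => (five_absurd hS
            (hmem 1 0 (by decide)) (hmem 2 0 (by decide)) (hmem 3 0 (by decide))
            (hmem 3 2 (by decide)) (hmem 2 1 (by decide))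
            -- s01 ≠ s02
            (W 0 1 2 (by decide) (by decide) (by decide))
            -- s01 ≠ s03
            (W 0 1 3 (by decide) (by decide) (by decide))
            -- s01 ≠ s23
            hA
            -- s01 ≠ s12
            (by rw [scomm 1 0]; exact W 1 0 2 (by decide) (by decide) (by decide))
            -- s02 ≠ s03
            (W 0 2 3 (by decide) (by decide) (by decide))
            -- s02 ≠ s23
            (by rw [scomm 2 0]; exact W 2 0 3 (by decide) (by decide) (by decide))
            -- s02 ≠ s12
            (by rw [scomm 2 0, scomm 2 1]
                exact W 2 0 1 (by decide) (by decide) (by decide))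
            -- s03 ≠ s23
            (by rw [scomm 3 0, scomm 3 2]
                exact W 3 0 2 (by decide) (by decide) (by decide))
            -- s03 ≠ s12
            hC
            -- s23 ≠ s12
            (by rw [scomm 2 1]; exact W 2 3 1 (by decide) (by decide) (by decide))))
      · -- ¬hA, ¬hB : contradiction with {s01, s02, s03, s23, s13}
        exact absurd (rfl : (0:Nat) = 0) (fun _ => (five_absurd hS
          (hmem 1 0 (by decide)) (hmem 2 0 (by decide)) (hmem 3 0 (by decide))
          (hmem 3 2 (by decide)) (hmem 3 1 (by decide))
          -- s01 ≠ s02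
          (W 0 1 2 (by decide) (by decide) (by decide))
          -- s01 ≠ s03
          (W 0 1 3 (by decide) (by decide) (by decide))
          -- s01 ≠ s23
          hA
          -- s01 ≠ s13
          (by rw [scomm 1 0]; exact W 1 0 3 (by decide) (by decide) (by decide))
          -- s02 ≠ s03
          (W 0 2 3 (by decide) (by decide) (by decide))
          -- s02 ≠ s23
          (by rw [scomm 2 0]; exact W 2 0 3 (by decide) (by decide) (by decide))
          -- s02 ≠ s13
          hB
          -- s03 ≠ s23
          (by rw [scomm 3 0, scomm 3 2]
              exact W 3 0 2 (by decide) (by decide) (by decide))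
          -- s03 ≠ s13
          (by rw [scomm 3 0, scomm 3 1]
              exact W 3 0 1 (by decide) (by decide) (by decide))
          -- s23 ≠ s13
          (by rw [scomm 3 2, scomm 3 1]
              exact W 3 2 1 (by decide) (by decide) (by decide))))
  · rintro ⟨T, hT⟩
    classical
    set q : Fin 4 → ℝ × ℝ := ![(0, 0), (1, 0), (1, 1), (0, 1)] with hq
    have hdiff : ∀ i j : Fin 4, T (q i) - T (q j) = T.linear (q i - q j) := by
      intro i j
      have h2 : T.linear (q i -ᵥ q j) = T (q i) -ᵥ T (q j) := by
        simpa using AffineMap.linearMap_vsub (T : (ℝ × ℝ) →ᵃ[ℝ] (ℝ × ℝ)) (q i) (q j)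
      simpa [vsub_eq_sub] using h2.symm
    have hneg : ∀ w : ℝ × ℝ, dir (T.linear (-w)) = dir (T.linear w) := fun w => by
      rw [map_neg, dir_neg]
    have hmem4 : ∀ w : ℝ × ℝ,
        (w = (1, 0) ∨ w = (1, 1) ∨ w = (0, 1) ∨ w = (-1, 1) ∨
          w = -(1, 0) ∨ w = -(1, 1) ∨ w = -(0, 1) ∨ w = -(-1, 1)) →
        dir (T.linear w) ∈ S := by
      rintro w (rfl | rfl | rfl | rfl | rfl | rfl | rfl | rfl) <;>
        (try rw [hneg]) <;> rw [hT] <;> simp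
    refine ⟨fun i => T (q i), ?_, ?_, ?_⟩
    · intro i j h
      have hqij : q i = q j := T.injective h
      fin_cases i <;> fin_cases j <;>
        first
          | rfl
          | (exfalso; norm_num [hq, Prod.ext_iff] at hqij)
    · intro i j k hij hjk hik hcol
      have hcol' : Collinear ℝ ({q i, q j, q k} : Set (ℝ × ℝ)) := collinear_of_image T hcol
      rw [collinear_triple_iff] at hcol'
      fin_cases i <;> fin_cases j <;> fin_cases k <;>
        first
          | exact absurd rfl hij
          | exact absurd rfl hjk
          | exact absurd rfl hik
          | norm_num [hq, cross] at hcol'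
    · intro i j hij
      show dir (T (q i) - T (q j)) ∈ S
      rw [hdiff]
      apply hmem4
      fin_cases i <;> fin_cases j <;>
        first
          | exact absurd rfl hij
          | norm_num [hq, Prod.ext_iff]
end

section
/- Any straight-line drawing of the complete graph K₄ requires at least 4 distinct edge slopes; that is, the slope number of K₄ is at least 4. -/
/-!
The three edges at a vertex of a drawing of `K₄` have pairwise distinct slopes, since no
vertex lies inside the segment spanned by two others. With only three slopes, every other
edge avoids the slopes of the two edges it shares a vertex with, so each pair of opposite
edges is parallel. Two pairs of parallel opposite sides make `p₀ p₁ p₃ p₂` a parallelogram,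
and then the third pair consists of its diagonals, which are never parallel.
-/

lemma dir_eq_dir_iff {u v : ℝ × ℝ} (hu : u ≠ 0) (hv : v ≠ 0) :
    dir u = dir v ↔ ∃ t : ℝ, u = t • v := by
  rw [dir, dir, dif_neg hu, dif_neg hv, Projectivization.mk_eq_mk_iff']
  simp only [eq_comm]

lemma dir_neg (v : ℝ × ℝ) : dir (-v) = dir v := by
  rcases eq_or_ne v 0 with rfl | hv
  · rw [neg_zero]
  · exact (dir_eq_dir_iff (neg_ne_zero.mpr hv) hv).mpr ⟨-1, (neg_one_smul ℝ v).symm⟩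

lemma dir_sub_comm (a b : ℝ × ℝ) : dir (a - b) = dir (b - a) := by
  rw [← neg_sub, dir_neg]

lemma linearIndependent_pair_of_dir_ne {u v : ℝ × ℝ} (hu : u ≠ 0) (hv : v ≠ 0)
    (h : dir u ≠ dir v) : LinearIndependent ℝ ![u, v] :=
  (LinearIndependent.pair_iff' hu).mpr fun t ht =>
    h ((dir_eq_dir_iff hv hu).mpr ⟨t, ht.symm⟩).symm

section Collinear

variable {𝕜 E : Type*} [AddCommGroup E]

lemma collinear_of_sub_eq_smul_sub [Field 𝕜] [Module 𝕜 E] {a b c : E} {t : 𝕜}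
    (h : a - b = t • (a - c)) : Collinear 𝕜 ({a, b, c} : Set E) := by
  rw [collinear_iff_of_mem (Set.mem_insert a _)]
  refine ⟨a - c, ?_⟩
  rintro x (rfl | rfl | rfl)
  · exact ⟨0, by simp⟩
  · exact ⟨-t, by rw [vadd_eq_add, neg_smul, ← h]; abel⟩
  · exact ⟨-1, by simp⟩

lemma Collinear.mem_openSegment [Field 𝕜] [LinearOrder 𝕜] [IsStrictOrderedRing 𝕜] [Module 𝕜 E]
    {x y z : E} (h : Collinear 𝕜 ({x, y, z} : Set E))
    (hxy : x ≠ y) (hyz : y ≠ z) (hxz : x ≠ z) :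
    y ∈ openSegment 𝕜 x z ∨ z ∈ openSegment 𝕜 y x ∨ x ∈ openSegment 𝕜 z y := by
  simp only [openSegment_eq_image_lineMap]
  rcases h.wbtw_or_wbtw_or_wbtw with h | h | h
  · exact .inl (Sbtw.mem_image_Ioo ⟨h, hxy.symm, hyz⟩)
  · exact .inr (.inl (Sbtw.mem_image_Ioo ⟨h, hyz.symm, hxz.symm⟩))
  · exact .inr (.inr (Sbtw.mem_image_Ioo ⟨h, hxz, hxy⟩))

end Collinear

lemma dir_sub_ne_dir_sub {a b c : ℝ × ℝ} (hab : a ≠ b) (hbc : b ≠ c) (hac : a ≠ c)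
    (hb : b ∉ openSegment ℝ a c) (hc : c ∉ openSegment ℝ b a) (ha : a ∉ openSegment ℝ c b) :
    dir (a - b) ≠ dir (a - c) := by
  intro h
  obtain ⟨t, ht⟩ := (dir_eq_dir_iff (sub_ne_zero.mpr hab) (sub_ne_zero.mpr hac)).mp h
  rcases (collinear_of_sub_eq_smul_sub ht).mem_openSegment hab hbc hac with h | h | h
  exacts [hb h, hc h, ha h]

lemma edgeColoring_K4_opposite_eq {α : Type*} (c : Fin 4 → Fin 4 → α)
    (hsymm : ∀ i j, c i j = c j i)
    (hproper : ∀ i j k, j ≠ i → k ≠ i → j ≠ k → c i j ≠ c i k)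
    (hcard : {x | ∃ i j, i ≠ j ∧ c i j = x}.ncard < 4) :
    c 2 3 = c 0 1 ∧ c 1 3 = c 0 2 ∧ c 1 2 = c 0 3 := by
  set S := {x | ∃ i j, i ≠ j ∧ c i j = x}
  have hsub : {c 0 1, c 0 2, c 0 3} ⊆ S := by
    rintro x (rfl | rfl | rfl) <;> exact ⟨_, _, by decide, rfl⟩
  have hfin : S.Finite := (Set.finite_range fun q : Fin 4 × Fin 4 => c q.1 q.2).subset
    (by rintro _ ⟨i, j, -, rfl⟩; exact ⟨(i, j), rfl⟩)
  have hthree : ({c 0 1, c 0 2, c 0 3} : Set α).ncard = 3 := Set.ncard_eq_three.mpr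
    ⟨_, _, _, hproper 0 1 2 (by decide) (by decide) (by decide),
      hproper 0 1 3 (by decide) (by decide) (by decide),
      hproper 0 2 3 (by decide) (by decide) (by decide), rfl⟩
  have hS : S = {c 0 1, c 0 2, c 0 3} :=
    (Set.eq_of_subset_of_ncard_le hsub (by omega) hfin).symm
  have mem : ∀ i j, i ≠ j → c i j = c 0 1 ∨ c i j = c 0 2 ∨ c i j = c 0 3 := fun i j hij => by
    have h : c i j ∈ S := ⟨i, j, hij, rfl⟩
    rwa [hS] at h
  have avoid : ∀ i j, i ≠ j → i ≠ 0 → j ≠ 0 → c i j ≠ c 0 i ∧ c i j ≠ c 0 j :=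
    fun i j hij hi hj => ⟨hsymm 0 i ▸ hproper i j 0 hij.symm hi.symm hj,
      hsymm i j ▸ hsymm 0 j ▸ hproper j i 0 hij hj.symm hi⟩
  refine ⟨?_, ?_, ?_⟩
  · have := mem 2 3 (by decide); have := avoid 2 3 (by decide) (by decide) (by decide); tauto
  · have := mem 1 3 (by decide); have := avoid 1 3 (by decide) (by decide) (by decide); tauto
  · have := mem 1 2 (by decide); have := avoid 1 2 (by decide) (by decide) (by decide); tauto

lemma not_opposite_edges_parallel {K V : Type*} [Field K] [NeZero (2 : K)] [AddCommGroup V]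
    [Module K V] {a b c d : V} (hind : LinearIndependent K ![a - b, a - c]) {r s t : K}
    (h₁ : c - d = r • (a - b)) (h₂ : b - d = s • (a - c)) (h₃ : b - c = t • (a - d)) :
    False := by
  rw [LinearIndependent.pair_iff] at hind
  obtain ⟨hr, -⟩ := hind (r - 1) (1 - s) (by linear_combination (norm := module) h₂ - h₁)
  obtain rfl : r = 1 := sub_eq_zero.mp hr
  obtain ⟨ht₁, ht₂⟩ := hind (t + 1) (t - 1) (by linear_combination (norm := module) -h₃ - t • h₁)
  exact two_ne_zero (α := K) (by linear_combination ht₁ - ht₂)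

/-- Any straight-line drawing of `K₄` uses at least four distinct edge slopes. -/
theorem K4_slope_number_ge_four (p : Fin 4 → ℝ × ℝ) (hinj : Function.Injective p)
    (hnd : ∀ i j k : Fin 4, i ≠ j → k ≠ i → k ≠ j → p k ∉ openSegment ℝ (p i) (p j)) :
    4 ≤ {s | ∃ i j : Fin 4, i ≠ j ∧ dir (p i - p j) = s}.ncard := by
  by_contra! hlt
  have hne : ∀ i j, i ≠ j → p i - p j ≠ 0 := fun i j hij => sub_ne_zero.mpr (hinj.ne hij)
  have hproper : ∀ i j k, j ≠ i → k ≠ i → j ≠ k → dir (p i - p j) ≠ dir (p i - p k) :=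
    fun i j k hji hki hjk =>
      dir_sub_ne_dir_sub (hinj.ne hji.symm) (hinj.ne hjk) (hinj.ne hki.symm)
        (hnd i k j hki.symm hji hjk) (hnd j i k hji hjk.symm hki)
        (hnd k j i hjk.symm hki.symm hji.symm)
  obtain ⟨h23, h13, h12⟩ := edgeColoring_K4_opposite_eq (fun i j => dir (p i - p j))
    (fun i j => dir_sub_comm (p i) (p j)) hproper hlt
  obtain ⟨r, hr⟩ := (dir_eq_dir_iff (hne 2 3 (by decide)) (hne 0 1 (by decide))).mp h23
  obtain ⟨s, hs⟩ := (dir_eq_dir_iff (hne 1 3 (by decide)) (hne 0 2 (by decide))).mp h13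
  obtain ⟨t, ht⟩ := (dir_eq_dir_iff (hne 1 2 (by decide)) (hne 0 3 (by decide))).mp h12
  have hind := linearIndependent_pair_of_dir_ne (hne 0 1 (by decide)) (hne 0 2 (by decide))
    (hproper 0 1 2 (by decide) (by decide) (by decide))
  exact not_opposite_edges_parallel hind hr hs ht
end
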